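/- arXiv:2205.14452 — 5 statements merged into one kernel-verified Lean document; each statement's English description precedes it below -/
import Mathlib

section
/- One-step progress of the compressed dual update (Lemma `recursion_y`, scalar blocks d_y = 1). Let W be an m×m real symmetric matrix with W𝟙 = 𝟙 whose eigenvalues lie in (−1,1], so I−W is symmetric PSD; write λ_max(I−W) and λ_{m−1}(I−W) for its largest and second-smallest eigenvalues. Let P be an m×m symmetric PSD matrix with (I−W)P(I−W) = I−W (a symmetric generalized inverse, playing the role of (I−W)†), and write ‖v‖²_P := vᵀPv. Let r : ℝ → ℝ be convex continuous, Y ⊆ ℝ nonempty closed convex, s > 0, and prox(u) := the unique minimizer over Y of w ↦ s·r(w) + (1/2)(w−u)², applied componentwise to vectors. Let f_i : ℝ×ℝ → ℝ (i=1,…,m) be differentiable, f := Σᵢ f_i, F(x,y) := Σᵢ f_i(xⁱ,yⁱ), and let (x⋆,y⋆) satisfy the fixed point y⋆ = prox(y⋆ + (s/m)∇_y f(x⋆,y⋆)); set D⋆_y := (I−J)∇_y F(𝟙x⋆,𝟙y⋆) with J = (1/m)𝟙𝟙ᵀ and H⋆_y := 𝟙(y⋆ + (s/m)∇_y f(x⋆,y⋆)).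 Let δ ∈ [0,1], α_y ∈ (0, 1/(1+δ)), γ_y ∈ (0, min{(2−2√δ·α_y)/λ_max(I−W), (α_y − (1+δ)α_y²)/(√δ·λ_max(I−W))}) (the second bound read as no constraint when δ = 0), and M_y := 1 − √δ·α_y/(1 − (γ_y/2)λ_max(I−W)). Given deterministic vectors y_t, G^y, D^y_t, H^y_t ∈ ℝ^m with D^y_t − D⋆_y ∈ Range(I−W), define ν := y_t + sG^y − sD^y_t, let ν̂ be a random vector on a probability space with E[ν̂] = ν and E‖ν̂ − ν‖² ≤ δ‖ν − H^y_t‖², and set D^y_{t+1} := D^y_t + (γ_y/(2s))(I−W)ν̂, ŷ := ν − (γ_y/2)(I−W)ν̂, y_{t+1} := prox(ŷ) componentwise, H^y_{t+1} := (1−α_y)H^y_t + α_y ν̂. Then: M_y·E‖y_{t+1} − 𝟙y⋆‖² + (2s²/γ_y)·E‖D^y_{t+1} − D⋆_y‖²_P + √δ·E‖H^y_{t+1} − H⋆_y‖² ≤ ‖y_t − 𝟙y⋆ + sG^y − s∇_y F(𝟙x⋆,𝟙y⋆)‖² + (2s²/γ_y)(1 − (γ_y/2)λ_{m−1}(I−W))·‖D^y_t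 − D⋆_y‖²_P + √δ(1−α_y)·‖H^y_t − H⋆_y‖². -/
/-!
Write `L = I - W`, `e = ν - H⋆`, `h = H^y_t - H⋆`, `D^y_t - D⋆ = L u` and `z = ν̂ - ν`. As `L` kills
constants, `L H⋆ = 0`, so each updated error is a deterministic vector plus a multiple of `z` or
`L z`; since `z` has mean zero, its expected square is the deterministic square plus a noise
moment. The prox is 1-Lipschitz and maps `H⋆` to `𝟙y⋆`, so it can be dropped from the primal
error, and `L P L = L` turns `‖L w‖²_P` into `wᵀ L w`. With the weight `2s²/γ` the primal-dual
cross terms cancel; `‖L v‖² ≤ λ_max vᵀ L v` and `λ_{m-1} vᵀ L v ≤ ‖L v‖²` (both through a square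
root of `L`) bound what is left of the primal and dual terms, and the first step-size condition
puts `M_y` in `[0, 1]`. Finally `‖(1-α)h + αe‖² = (1-α)‖h‖² + α‖e‖² - α(1-α)‖e - h‖²`, and the
second step-size condition lets the negative term absorb all the noise, as `E‖z‖² ≤ δ‖e - h‖²`.
-/

open MeasureTheory Matrix Filter

section Spectral

variable {n : Type*} [Fintype n]

lemma dotProduct_self_nonneg (v : n → ℝ) : 0 ≤ v ⬝ᵥ v :=
  dotProduct_self_star_nonneg v

lemma Matrix.IsSymm.mulVec_dotProduct {A : Matrix n n ℝ} (hA : A.IsSymm) (x y : n → ℝ) :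
    A *ᵥ x ⬝ᵥ y = x ⬝ᵥ A *ᵥ y := by
  rw [dotProduct_mulVec, ← mulVec_transpose, hA.eq]

lemma Matrix.IsSymm.mulVec_dotProduct_mulVec_mulVec_of_mul_mul_eq_self {L P : Matrix n n ℝ}
    (hL : L.IsSymm) (hLPL : L * P * L = L) (x : n → ℝ) :
    L *ᵥ x ⬝ᵥ P *ᵥ (L *ᵥ x) = x ⬝ᵥ L *ᵥ x := by
  rw [hL.mulVec_dotProduct, mulVec_mulVec, mulVec_mulVec, hLPL]

lemma smul_dotProduct_mulVec_smul (Q : Matrix n n ℝ) (c : ℝ) (v : n → ℝ) :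
    c • v ⬝ᵥ Q *ᵥ (c • v) = c ^ 2 * (v ⬝ᵥ Q *ᵥ v) := by
  rw [mulVec_smul, smul_dotProduct, dotProduct_smul, smul_eq_mul, smul_eq_mul]
  ring

lemma dotProduct_mulVec_le_mul_of_forall_unit_mem {K : Submodule ℝ (n → ℝ)}
    {Q : Matrix n n ℝ} {c : ℝ} (h : ∀ v ∈ K, v ⬝ᵥ v = 1 → v ⬝ᵥ Q *ᵥ v ≤ c) {v : n → ℝ}
    (hv : v ∈ K) : v ⬝ᵥ Q *ᵥ v ≤ c * (v ⬝ᵥ v) := by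
  obtain hv0 | hvpos := (dotProduct_self_nonneg v).eq_or_lt
  · simp [dotProduct_self_eq_zero.mp hv0.symm]
  set t := (√(v ⬝ᵥ v))⁻¹
  have ht : t ^ 2 * (v ⬝ᵥ v) = 1 := by
    rw [inv_pow, Real.sq_sqrt hvpos.le, inv_mul_cancel₀ hvpos.ne']
  have hunit : t • v ⬝ᵥ t • v = 1 := by
    rw [smul_dotProduct, dotProduct_smul, smul_eq_mul, smul_eq_mul, ← mul_assoc, ← sq, ht]
  calc v ⬝ᵥ Q *ᵥ v = (v ⬝ᵥ v) * (t • v ⬝ᵥ Q *ᵥ (t • v)) := by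
        rw [smul_dotProduct_mulVec_smul, ← mul_assoc, mul_comm (v ⬝ᵥ v), ht, one_mul]
    _ ≤ (v ⬝ᵥ v) * c := mul_le_mul_of_nonneg_left (h _ (K.smul_mem t hv) hunit) hvpos.le
    _ = c * (v ⬝ᵥ v) := mul_comm _ _

lemma dotProduct_mulVec_le_mul_of_forall_unit {Q : Matrix n n ℝ} {c : ℝ}
    (h : ∀ v, v ⬝ᵥ v = 1 → v ⬝ᵥ Q *ᵥ v ≤ c) (v : n → ℝ) : v ⬝ᵥ Q *ᵥ v ≤ c * (v ⬝ᵥ v) :=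
  dotProduct_mulVec_le_mul_of_forall_unit_mem (K := ⊤) (fun v _ => h v) Submodule.mem_top

variable [DecidableEq n]

open scoped MatrixOrder in
lemma Matrix.PosSemidef.exists_isSymm_mul_self_eq {L : Matrix n n ℝ} (hL : L.PosSemidef) :
    ∃ S : Matrix n n ℝ, S.IsSymm ∧ S * S = L :=
  ⟨CFC.sqrt L, isHermitian_iff_isSymm.mp (CFC.sqrt_nonneg L).posSemidef.isHermitian,
    CFC.sqrt_mul_sqrt_self L hL.nonneg⟩

lemma Matrix.PosSemidef.mulVec_dotProduct_mulVec_le {L : Matrix n n ℝ} (hL : L.PosSemidef)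
    {c : ℝ} (h : ∀ v, v ⬝ᵥ v = 1 → v ⬝ᵥ L *ᵥ v ≤ c) (u : n → ℝ) :
    L *ᵥ u ⬝ᵥ L *ᵥ u ≤ c * (u ⬝ᵥ L *ᵥ u) := by
  obtain ⟨S, hS, rfl⟩ := hL.exists_isSymm_mul_self_eq
  simpa only [← mulVec_mulVec, hS.mulVec_dotProduct] using
    dotProduct_mulVec_le_mul_of_forall_unit h (S *ᵥ u)

lemma Matrix.PosSemidef.mul_dotProduct_mulVec_le {L : Matrix n n ℝ} (hL : L.PosSemidef)
    (hL1 : L *ᵥ (fun _ => 1) = 0) {c : ℝ}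
    (h : ∀ v, v ⬝ᵥ v = 1 → ∑ i, v i = 0 → c ≤ v ⬝ᵥ L *ᵥ v) (u : n → ℝ) :
    c * (u ⬝ᵥ L *ᵥ u) ≤ L *ᵥ u ⬝ᵥ L *ᵥ u := by
  obtain ⟨S, hS, rfl⟩ := hL.exists_isSymm_mul_self_eq
  have hS1 : S *ᵥ (fun _ => 1) = 0 := dotProduct_self_eq_zero.mp <| by
    rw [hS.mulVec_dotProduct, mulVec_mulVec, hL1, dotProduct_zero]
  let K : Submodule ℝ (n → ℝ) := LinearMap.ker (Fintype.linearCombination ℝ fun _ => (1 : ℝ))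
  have hK : ∀ v, v ∈ K ↔ ∑ i, v i = 0 := by simp [K, Fintype.linearCombination_apply]
  have hSu : S *ᵥ u ∈ K := by
    have : (fun _ => (1 : ℝ)) ⬝ᵥ S *ᵥ u = 0 := by
      rw [← hS.mulVec_dotProduct, hS1, zero_dotProduct]
    simpa [hK, dotProduct] using this
  have := dotProduct_mulVec_le_mul_of_forall_unit_mem (K := K) (Q := -(S * S)) (c := -c)
    (fun v hv hv1 => by simpa [neg_mulVec] using h v hv1 ((hK v).mp hv)) hSu
  simp only [neg_mulVec, dotProduct_neg, neg_mul, neg_le_neg_iff] at this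
  simpa only [← mulVec_mulVec, hS.mulVec_dotProduct] using this

end Spectral

section CenteredNoise

variable {n Ω : Type*} [Fintype n] [MeasurableSpace Ω] {μ : Measure Ω} {z : Ω → n → ℝ}

lemma memLp_dotProduct (hz : ∀ i, MemLp (fun ω => z ω i) 2 μ) (c : n → ℝ) :
    MemLp (fun ω => c ⬝ᵥ z ω) 2 μ :=
  memLp_finsetSum _ fun i _ => (hz i).const_mul (c i)

lemma memLp_mulVec (hz : ∀ i, MemLp (fun ω => z ω i) 2 μ) (A : Matrix n n ℝ) (i : n) :
    MemLp (fun ω => (A *ᵥ z ω) i) 2 μ :=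
  memLp_dotProduct hz (A i)

lemma integrable_dotProduct_mulVec (hz : ∀ i, MemLp (fun ω => z ω i) 2 μ) (Q : Matrix n n ℝ) :
    Integrable (fun ω => z ω ⬝ᵥ Q *ᵥ z ω) μ :=
  integrable_finsetSum _ fun i _ => (hz i).integrable_mul (memLp_mulVec hz Q i)

lemma integrable_dotProduct_self (hz : ∀ i, MemLp (fun ω => z ω i) 2 μ) :
    Integrable (fun ω => z ω ⬝ᵥ z ω) μ :=
  integrable_finsetSum _ fun i _ => (hz i).integrable_mul (hz i)

lemma integral_dotProduct_eq_zero (hz : ∀ i, Integrable (fun ω => z ω i) μ)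
    (hz0 : ∀ i, ∫ ω, z ω i ∂μ = 0) (c : n → ℝ) : ∫ ω, c ⬝ᵥ z ω ∂μ = 0 := by
  simp only [dotProduct]
  rw [integral_finsetSum _ fun i _ => (hz i).const_mul (c i)]
  simp [integral_const_mul, hz0]

lemma integral_mulVec_eq_zero (hz : ∀ i, Integrable (fun ω => z ω i) μ)
    (hz0 : ∀ i, ∫ ω, z ω i ∂μ = 0) (A : Matrix n n ℝ) (i : n) :
    ∫ ω, (A *ᵥ z ω) i ∂μ = 0 :=
  integral_dotProduct_eq_zero hz hz0 (A i)

variable [IsProbabilityMeasure μ]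

lemma integral_add_smul_dotProduct_mulVec (hz : ∀ i, MemLp (fun ω => z ω i) 2 μ)
    (hz0 : ∀ i, ∫ ω, z ω i ∂μ = 0) (b : n → ℝ) (c : ℝ) (Q : Matrix n n ℝ) :
    ∫ ω, (b + c • z ω) ⬝ᵥ Q *ᵥ (b + c • z ω) ∂μ
      = b ⬝ᵥ Q *ᵥ b + c ^ 2 * ∫ ω, z ω ⬝ᵥ Q *ᵥ z ω ∂μ := by
  have hexpand : ∀ ω, (b + c • z ω) ⬝ᵥ Q *ᵥ (b + c • z ω)
      = b ⬝ᵥ Q *ᵥ b + (c • (b ᵥ* Q + Q *ᵥ b)) ⬝ᵥ z ω + c ^ 2 * (z ω ⬝ᵥ Q *ᵥ z ω) := by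
    intro ω
    simp only [mulVec_add, mulVec_smul, dotProduct_add, add_dotProduct, smul_dotProduct,
      dotProduct_smul, smul_eq_mul, dotProduct_mulVec b Q, dotProduct_comm (z ω) (Q *ᵥ b)]
    ring
  have hlin := (memLp_dotProduct hz (c • (b ᵥ* Q + Q *ᵥ b))).integrable one_le_two
  have hconst_lin : Integrable
      (fun ω => b ⬝ᵥ Q *ᵥ b + (c • (b ᵥ* Q + Q *ᵥ b)) ⬝ᵥ z ω) μ :=
    (integrable_const _).add hlin
  simp_rw [hexpand]
  rw [integral_add hconst_lin ((integrable_dotProduct_mulVec hz Q).const_mul _),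
    integral_add (integrable_const _) hlin,
    integral_dotProduct_eq_zero (fun i => (hz i).integrable one_le_two) hz0, integral_const_mul]
  simp

lemma integral_add_smul_dotProduct_self [DecidableEq n] (hz : ∀ i, MemLp (fun ω => z ω i) 2 μ)
    (hz0 : ∀ i, ∫ ω, z ω i ∂μ = 0) (b : n → ℝ) (c : ℝ) :
    ∫ ω, (b + c • z ω) ⬝ᵥ (b + c • z ω) ∂μ = b ⬝ᵥ b + c ^ 2 * ∫ ω, z ω ⬝ᵥ z ω ∂μ := by
  simpa using integral_add_smul_dotProduct_mulVec hz hz0 b c 1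

lemma integral_dotProduct_self_le_of_le [DecidableEq n] (hz : ∀ i, MemLp (fun ω => z ω i) 2 μ)
    (hz0 : ∀ i, ∫ ω, z ω i ∂μ = 0) {x : Ω → n → ℝ} {b : n → ℝ} {c : ℝ}
    (hx : ∀ ω, x ω ⬝ᵥ x ω ≤ (b + c • z ω) ⬝ᵥ (b + c • z ω)) :
    ∫ ω, x ω ⬝ᵥ x ω ∂μ ≤ b ⬝ᵥ b + c ^ 2 * ∫ ω, z ω ⬝ᵥ z ω ∂μ := by
  rw [← integral_add_smul_dotProduct_self hz hz0]
  exact integral_mono_of_nonneg (ae_of_all _ fun _ => dotProduct_self_nonneg _)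
    (integrable_dotProduct_self fun i => (memLp_const (b i)).add ((hz i).const_mul c))
    (ae_of_all _ hx)

end CenteredNoise

section IntegratedRayleigh

variable {n Ω : Type*} [Fintype n] [MeasurableSpace Ω] {μ : Measure Ω}
  {z : Ω → n → ℝ} {L : Matrix n n ℝ} {c : ℝ}

lemma integral_mulVec_dotProduct_mulVec_le [DecidableEq n] (hL : L.PosSemidef)
    (h : ∀ v, v ⬝ᵥ v = 1 → v ⬝ᵥ L *ᵥ v ≤ c) (hz : ∀ i, MemLp (fun ω => z ω i) 2 μ) :
    ∫ ω, L *ᵥ z ω ⬝ᵥ L *ᵥ z ω ∂μ ≤ c * ∫ ω, z ω ⬝ᵥ L *ᵥ z ω ∂μ :=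
  (integral_mono (integrable_dotProduct_self (memLp_mulVec hz L))
    ((integrable_dotProduct_mulVec hz L).const_mul c)
    fun ω => hL.mulVec_dotProduct_mulVec_le h (z ω)).trans_eq (integral_const_mul _ _)

lemma integral_dotProduct_mulVec_le (h : ∀ v, v ⬝ᵥ v = 1 → v ⬝ᵥ L *ᵥ v ≤ c)
    (hz : ∀ i, MemLp (fun ω => z ω i) 2 μ) :
    ∫ ω, z ω ⬝ᵥ L *ᵥ z ω ∂μ ≤ c * ∫ ω, z ω ⬝ᵥ z ω ∂μ :=
  (integral_mono (integrable_dotProduct_mulVec hz L) ((integrable_dotProduct_self hz).const_mul c)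
    fun ω => dotProduct_mulVec_le_mul_of_forall_unit h (z ω)).trans_eq (integral_const_mul _ _)

end IntegratedRayleigh

section Prox

variable {Y : Set ℝ} {g : ℝ → ℝ}

lemma ConvexOn.sub_le_of_isMinOn_add_sq (hg : ConvexOn ℝ Y g) {u p w : ℝ} (hp : p ∈ Y)
    (hmin : IsMinOn (fun x => g x + 1 / 2 * (x - u) ^ 2) Y p) (hw : w ∈ Y) :
    g p - g w ≤ (w - p) * (p - u) := by
  have hstep : ∀ t ∈ Set.Ioc (0 : ℝ) 1,
      g p - g w ≤ (w - p) * (p - u) + t / 2 * (w - p) ^ 2 := by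
    rintro t ⟨ht0, ht1⟩
    have hconv := hg.2 hp hw (sub_nonneg.mpr ht1) ht0.le (sub_add_cancel 1 t)
    have hopt := isMinOn_iff.mp hmin _
      (hg.1 hp hw (sub_nonneg.mpr ht1) ht0.le (sub_add_cancel 1 t))
    simp only [smul_eq_mul] at hconv hopt
    refine le_of_mul_le_mul_left ?_ ht0
    linarith
  have hlim := (Continuous.tendsto (f := fun t : ℝ => (w - p) * (p - u) + t / 2 * (w - p) ^ 2)
    (by fun_prop) 0).mono_left (nhdsWithin_le_nhds (s := Set.Ioi 0))
  rw [zero_div, zero_mul, add_zero] at hlim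
  exact ge_of_tendsto hlim (eventually_of_mem (Ioc_mem_nhdsGT one_pos) hstep)

lemma ConvexOn.lipschitzWith_prox (hg : ConvexOn ℝ Y g) {prox : ℝ → ℝ}
    (hprox : ∀ u, prox u ∈ Y ∧ IsMinOn (fun x => g x + 1 / 2 * (x - u) ^ 2) Y (prox u)) :
    LipschitzWith 1 prox := by
  refine LipschitzWith.of_dist_le_mul fun u v => ?_
  have huv := hg.sub_le_of_isMinOn_add_sq (hprox u).1 (hprox u).2 (hprox v).1
  have hvu := hg.sub_le_of_isMinOn_add_sq (hprox v).1 (hprox v).2 (hprox u).1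
  have hfirm : (prox u - prox v) ^ 2 ≤ (prox u - prox v) * (u - v) := by linarith
  rw [NNReal.coe_one, one_mul, Real.dist_eq, Real.dist_eq, ← sq_le_sq]
  nlinarith [sq_nonneg (prox u - prox v - (u - v))]

lemma LipschitzWith.comp_sub_dotProduct_le {n : Type*} [Fintype n] {φ : ℝ → ℝ}
    (hφ : LipschitzWith 1 φ) (x y : n → ℝ) :
    (φ ∘ x - φ ∘ y) ⬝ᵥ (φ ∘ x - φ ∘ y) ≤ (x - y) ⬝ᵥ (x - y) :=
  Finset.sum_le_sum fun i _ => by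
    have := hφ.dist_le_mul (x i) (y i)
    rw [NNReal.coe_one, one_mul, Real.dist_eq, Real.dist_eq, ← sq_le_sq] at this
    simpa [sq] using this

end Prox

section OneStep

variable {n : Type*} [Fintype n]

lemma add_smul_dotProduct_self (x y : n → ℝ) (c : ℝ) :
    (x + c • y) ⬝ᵥ (x + c • y) = x ⬝ᵥ x + 2 * c * (x ⬝ᵥ y) + c ^ 2 * (y ⬝ᵥ y) := by
  simp only [dotProduct_add, add_dotProduct, dotProduct_smul, smul_dotProduct, smul_eq_mul,
    dotProduct_comm y x]
  ring

lemma Matrix.IsSymm.add_smul_dotProduct_mulVec {L : Matrix n n ℝ} (hL : L.IsSymm)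
    (x y : n → ℝ) (c : ℝ) :
    (x + c • y) ⬝ᵥ L *ᵥ (x + c • y)
      = x ⬝ᵥ L *ᵥ x + 2 * c * (L *ᵥ x ⬝ᵥ y) + c ^ 2 * (y ⬝ᵥ L *ᵥ y) := by
  simp only [mulVec_add, mulVec_smul, dotProduct_add, add_dotProduct, dotProduct_smul,
    smul_dotProduct, smul_eq_mul, ← hL.mulVec_dotProduct y x, dotProduct_comm (L *ᵥ y) x,
    hL.mulVec_dotProduct x y]
  ring

lemma one_sub_smul_add_smul_dotProduct_self (x y : n → ℝ) (a : ℝ) :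
    ((1 - a) • x + a • y) ⬝ᵥ ((1 - a) • x + a • y)
      = (1 - a) * (x ⬝ᵥ x) + a * (y ⬝ᵥ y) - a * (1 - a) * ((y - x) ⬝ᵥ (y - x)) := by
  simp only [dotProduct_add, add_dotProduct, dotProduct_sub, sub_dotProduct, dotProduct_smul,
    smul_dotProduct, smul_eq_mul, dotProduct_comm y x]
  ring

lemma mul_sub_smul_mulVec_dotProduct_le {L : Matrix n n ℝ} {lmax M γ κ : ℝ} (hγ : 0 ≤ γ)
    (hτ : γ / 2 * lmax ≤ 1) (hM0 : 0 ≤ M) (hM1 : M ≤ 1)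
    (hM : M * (1 - γ / 2 * lmax) = 1 - γ / 2 * lmax - κ) {e : n → ℝ}
    (hT0 : 0 ≤ e ⬝ᵥ L *ᵥ e) (hTX : e ⬝ᵥ L *ᵥ e ≤ lmax * (e ⬝ᵥ e))
    (hT2 : L *ᵥ e ⬝ᵥ L *ᵥ e ≤ lmax * (e ⬝ᵥ L *ᵥ e)) :
    M * ((e - (γ / 2) • L *ᵥ e) ⬝ᵥ (e - (γ / 2) • L *ᵥ e)) + γ / 2 * (e ⬝ᵥ L *ᵥ e)
      ≤ (1 - κ) * (e ⬝ᵥ e) := by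
  rw [sub_eq_add_neg, ← neg_smul, add_smul_dotProduct_self]
  have h1 := mul_le_mul_of_nonneg_left hT2 (by positivity : 0 ≤ M * (γ / 2) ^ 2)
  have h2 := mul_le_mul_of_nonneg_left hTX
    (mul_nonneg (sub_nonneg.mpr hM1) (by positivity) : 0 ≤ (1 - M) * (γ / 2))
  have h3 := mul_nonneg (mul_nonneg (by positivity : 0 ≤ γ / 2)
    (mul_nonneg hM0 (sub_nonneg.mpr hτ))) hT0
  have hMX := congrArg (· * (e ⬝ᵥ e)) hM
  linarith

lemma mem_Icc_and_mul_eq_of_eq_one_sub_div {M a b : ℝ} (hM : M = 1 - a / (1 - b)) (ha : 0 ≤ a)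
    (hab : a + b < 1) : M ∈ Set.Icc 0 1 ∧ M * (1 - b) = 1 - b - a := by
  have hb : 0 < 1 - b := by linarith
  subst hM
  refine ⟨⟨?_, ?_⟩, by field_simp⟩
  · rw [sub_nonneg, div_le_one hb]
    linarith
  · linarith [div_nonneg ha hb.le]

theorem one_step_bound_of_moments {L : Matrix n n ℝ} (hL : L.IsSymm)
    {lmax l2 δ α γ s M Yn V W₂ W₃ : ℝ} {e u h : n → ℝ} (hs : 0 < s) (hγ : 0 < γ) (hδ : 0 ≤ δ)
    (hα : 0 < α) (hlmax : 0 ≤ lmax) (hγ1 : γ * lmax < 2 - 2 * √δ * α)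
    (hγ2 : √δ * γ * lmax < α - (1 + δ) * α ^ 2) (hM : M = 1 - √δ * α / (1 - γ / 2 * lmax))
    (hT0 : 0 ≤ e ⬝ᵥ L *ᵥ e) (hTX : e ⬝ᵥ L *ᵥ e ≤ lmax * (e ⬝ᵥ e))
    (hT2 : L *ᵥ e ⬝ᵥ L *ᵥ e ≤ lmax * (e ⬝ᵥ L *ᵥ e))
    (hu : l2 * (u ⬝ᵥ L *ᵥ u) ≤ L *ᵥ u ⬝ᵥ L *ᵥ u)
    (hW₂ : 0 ≤ W₂) (hW₃ : W₃ ≤ lmax * W₂) (hW₂V : W₂ ≤ lmax * V)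
    (hV : V ≤ δ * ((e - h) ⬝ᵥ (e - h)))
    (hY : Yn ≤ (e - (γ / 2) • L *ᵥ e) ⬝ᵥ (e - (γ / 2) • L *ᵥ e) + (γ / 2) ^ 2 * W₃) :
    M * Yn
      + 2 * s ^ 2 / γ * ((u + (γ / (2 * s)) • e) ⬝ᵥ L *ᵥ (u + (γ / (2 * s)) • e)
        + (γ / (2 * s)) ^ 2 * W₂)
      + √δ * (((1 - α) • h + α • e) ⬝ᵥ ((1 - α) • h + α • e) + α ^ 2 * V)
    ≤ (e + s • L *ᵥ u) ⬝ᵥ (e + s • L *ᵥ u) + 2 * s ^ 2 / γ * (1 - γ / 2 * l2) * (u ⬝ᵥ L *ᵥ u)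
      + √δ * (1 - α) * (h ⬝ᵥ h) := by
  obtain ⟨⟨hM0, hM1⟩, hMeq⟩ :=
    mem_Icc_and_mul_eq_of_eq_one_sub_div hM (by positivity) (by linarith)
  have hτ : γ / 2 * lmax ≤ 1 := by nlinarith [Real.sqrt_nonneg δ]
  have hprimal := mul_sub_smul_mulVec_dotProduct_le hγ.le hτ hM0 hM1 hMeq hT0 hTX hT2
  have hnoise : M * (γ / 2) ^ 2 * W₃ + γ / 2 * W₂ ≤ γ * lmax * V := by
    have h1 := mul_le_mul_of_nonneg_left hW₃ (by positivity : 0 ≤ M * (γ / 2) ^ 2)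
    have h2 := mul_le_mul_of_nonneg_left
      (mul_le_of_le_one_left hW₂ (mul_le_one₀ hM1 (by positivity) hτ)) (by positivity : 0 ≤ γ / 2)
    have h3 := mul_le_mul_of_nonneg_left hW₂V hγ.le
    linarith
  have htrack : (γ * lmax + √δ * α ^ 2) * V ≤ √δ * α * (1 - α) * ((e - h) ⬝ᵥ (e - h)) := by
    have hσ2 : √δ ^ 2 = δ := Real.sq_sqrt hδ
    refine (mul_le_mul_of_nonneg_left hV (by positivity)).trans ?_
    rw [← mul_assoc]
    refine mul_le_mul_of_nonneg_right ?_ (dotProduct_self_nonneg _)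
    nlinarith [mul_le_mul_of_nonneg_left hγ2.le (Real.sqrt_nonneg δ)]
  have hdual : 2 * s ^ 2 / γ * ((u + (γ / (2 * s)) • e) ⬝ᵥ L *ᵥ (u + (γ / (2 * s)) • e)
        + (γ / (2 * s)) ^ 2 * W₂)
      = 2 * s ^ 2 / γ * (u ⬝ᵥ L *ᵥ u) + 2 * s * (e ⬝ᵥ L *ᵥ u) + γ / 2 * (e ⬝ᵥ L *ᵥ e)
        + γ / 2 * W₂ := by
    rw [hL.add_smul_dotProduct_mulVec, dotProduct_comm (L *ᵥ u) e]
    field_simp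
  have hconsensus : 2 * s ^ 2 / γ * (1 - γ / 2 * l2) * (u ⬝ᵥ L *ᵥ u)
      = 2 * s ^ 2 / γ * (u ⬝ᵥ L *ᵥ u) - s ^ 2 * (l2 * (u ⬝ᵥ L *ᵥ u)) := by
    field_simp
  rw [hdual, hconsensus, one_sub_smul_add_smul_dotProduct_self, add_smul_dotProduct_self]
  linarith [mul_le_mul_of_nonneg_left hY hM0, mul_le_mul_of_nonneg_left hu (sq_nonneg s)]

theorem one_step_bound [DecidableEq n] {Ω : Type*} [MeasurableSpace Ω] {μ : Measure Ω}
    [IsProbabilityMeasure μ] {L P : Matrix n n ℝ} (hL : L.PosSemidef)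
    (hL1 : L *ᵥ (fun _ => 1) = 0) (hLPL : L * P * L = L)
    {lmax l2 δ α γ s M : ℝ} {e u h : n → ℝ} {z Yerr Derr Herr : Ω → n → ℝ}
    (hlmax : IsGreatest {t : ℝ | ∃ v : n → ℝ, v ⬝ᵥ v = 1 ∧ t = v ⬝ᵥ L *ᵥ v} lmax)
    (hl2 : IsLeast {t : ℝ | ∃ v : n → ℝ, v ⬝ᵥ v = 1 ∧ (∑ i, v i) = 0 ∧ t = v ⬝ᵥ L *ᵥ v} l2)
    (hs : 0 < s) (hγ : 0 < γ) (hδ : 0 ≤ δ) (hα : 0 < α) (hγ1 : γ * lmax < 2 - 2 * √δ * α)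
    (hγ2 : √δ * γ * lmax < α - (1 + δ) * α ^ 2) (hM : M = 1 - √δ * α / (1 - γ / 2 * lmax))
    (hz : ∀ i, MemLp (fun ω => z ω i) 2 μ) (hz0 : ∀ i, ∫ ω, z ω i ∂μ = 0)
    (hV : ∫ ω, z ω ⬝ᵥ z ω ∂μ ≤ δ * ((e - h) ⬝ᵥ (e - h)))
    (hY : ∀ ω, Yerr ω ⬝ᵥ Yerr ω ≤ (e - (γ / 2) • L *ᵥ e + (-(γ / 2)) • L *ᵥ z ω)
      ⬝ᵥ (e - (γ / 2) • L *ᵥ e + (-(γ / 2)) • L *ᵥ z ω))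
    (hD : ∀ ω, Derr ω = L *ᵥ (u + (γ / (2 * s)) • e + (γ / (2 * s)) • z ω))
    (hH : ∀ ω, Herr ω = (1 - α) • h + α • e + α • z ω) :
    M * ∫ ω, Yerr ω ⬝ᵥ Yerr ω ∂μ + 2 * s ^ 2 / γ * ∫ ω, Derr ω ⬝ᵥ P *ᵥ Derr ω ∂μ
      + √δ * ∫ ω, Herr ω ⬝ᵥ Herr ω ∂μ
    ≤ (e + s • L *ᵥ u) ⬝ᵥ (e + s • L *ᵥ u)
      + 2 * s ^ 2 / γ * (1 - γ / 2 * l2) * (L *ᵥ u ⬝ᵥ P *ᵥ (L *ᵥ u))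
      + √δ * (1 - α) * (h ⬝ᵥ h) := by
  have hLs : L.IsSymm := isHermitian_iff_isSymm.mp hL.isHermitian
  have hpsd : ∀ v, 0 ≤ v ⬝ᵥ L *ᵥ v := fun v => by simpa using hL.dotProduct_mulVec_nonneg v
  have hmax : ∀ v, v ⬝ᵥ v = 1 → v ⬝ᵥ L *ᵥ v ≤ lmax := fun v hv => hlmax.2 ⟨v, hv, rfl⟩
  have hmin : ∀ v, v ⬝ᵥ v = 1 → ∑ i, v i = 0 → l2 ≤ v ⬝ᵥ L *ᵥ v :=
    fun v hv hv0 => hl2.2 ⟨v, hv, hv0, rfl⟩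
  have hlmax0 : 0 ≤ lmax := by
    obtain ⟨v, -, rfl⟩ := hlmax.1
    exact hpsd v
  have hEY := integral_dotProduct_self_le_of_le (memLp_mulVec hz L)
    (integral_mulVec_eq_zero (fun i => (hz i).integrable one_le_two) hz0 L) hY
  have hED : ∫ ω, Derr ω ⬝ᵥ P *ᵥ Derr ω ∂μ
      = (u + (γ / (2 * s)) • e) ⬝ᵥ L *ᵥ (u + (γ / (2 * s)) • e)
        + (γ / (2 * s)) ^ 2 * ∫ ω, z ω ⬝ᵥ L *ᵥ z ω ∂μ := by
    simp_rw [hD, hLs.mulVec_dotProduct_mulVec_mulVec_of_mul_mul_eq_self hLPL]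
    exact integral_add_smul_dotProduct_mulVec hz hz0 _ _ L
  simp_rw [hH, integral_add_smul_dotProduct_self hz hz0]
  rw [neg_sq] at hEY
  rw [hED, hLs.mulVec_dotProduct_mulVec_mulVec_of_mul_mul_eq_self hLPL]
  exact one_step_bound_of_moments hLs hs hγ hδ hα hlmax0 hγ1 hγ2 hM (hpsd e)
    (dotProduct_mulVec_le_mul_of_forall_unit hmax e) (hL.mulVec_dotProduct_mulVec_le hmax e)
    (hL.mul_dotProduct_mulVec_le hL1 hmin u) (integral_nonneg fun ω => hpsd (z ω))
    (integral_mulVec_dotProduct_mulVec_le hL hmax hz) (integral_dotProduct_mulVec_le hmax hz)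
    hV hEY

end OneStep

theorem one_step_progress_compressed_dual_update_general {m : ℕ}
    (W : Matrix (Fin m) (Fin m) ℝ)
    (hW1 : W.mulVec (fun _ => (1 : ℝ)) = fun _ => (1 : ℝ))
    (hIWpsd : (1 - W).PosSemidef)
    (lmax l2 : ℝ)
    (hlmax : IsGreatest {t : ℝ | ∃ v : Fin m → ℝ, v ⬝ᵥ v = 1 ∧ t = v ⬝ᵥ (1 - W).mulVec v} lmax)
    (hl2 : IsLeast {t : ℝ | ∃ v : Fin m → ℝ,
        v ⬝ᵥ v = 1 ∧ (∑ i, v i) = 0 ∧ t = v ⬝ᵥ (1 - W).mulVec v} l2)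
    -- a symmetric PSD generalized inverse of `I - W`
    (P : Matrix (Fin m) (Fin m) ℝ)
    (hPgi : (1 - W) * P * (1 - W) = 1 - W)
    -- the proximal map of `s·r` over `Y`
    (r : ℝ → ℝ) (hr : ConvexOn ℝ Set.univ r)
    (Y : Set ℝ) (hYcv : Convex ℝ Y)
    (s : ℝ) (hs : 0 < s)
    (prox : ℝ → ℝ)
    (hprox : ∀ u : ℝ, prox u ∈ Y ∧ ∀ w ∈ Y,
        s * r (prox u) + (1 / 2) * (prox u - u) ^ 2 ≤ s * r w + (1 / 2) * (w - u) ^ 2)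
    -- the local functions and the fixed point
    (f : Fin m → ℝ → ℝ → ℝ)
    (xstar ystar : ℝ)
    (hfix : ystar = prox (ystar + (s / (m : ℝ)) * ∑ i, deriv (f i xstar) ystar))
    (Dstar Hstar : Fin m → ℝ)
    (hDstar : Dstar = fun i => deriv (f i xstar) ystar
        - (1 / (m : ℝ)) * ∑ j, deriv (f j xstar) ystar)
    (hHstar : Hstar = fun _ => ystar + (s / (m : ℝ)) * ∑ i, deriv (f i xstar) ystar)
    -- the compression and step-size parameters
    (δ αy γy : ℝ) (hδ : δ ∈ Set.Icc (0 : ℝ) 1)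
    (hαy : αy ∈ Set.Ioo (0 : ℝ) (1 / (1 + δ)))
    (hγy0 : 0 < γy) (hγy1 : γy * lmax < 2 - 2 * Real.sqrt δ * αy)
    (hγy2 : Real.sqrt δ * γy * lmax < αy - (1 + δ) * αy ^ 2)
    (My : ℝ) (hMy : My = 1 - Real.sqrt δ * αy / (1 - (γy / 2) * lmax))
    -- deterministic data of the current step
    (yt Gy Dyt Hyt : Fin m → ℝ)
    (hDrange : Dyt - Dstar ∈ Set.range (1 - W).mulVec)
    (ν : Fin m → ℝ) (hν : ν = yt + s • Gy - s • Dyt)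
    -- the stochastic compressed vector
    {Ω : Type*} [MeasurableSpace Ω] (μP : Measure Ω) [IsProbabilityMeasure μP]
    (νhat : Ω → Fin m → ℝ)
    (hνhatL2 : ∀ i, MemLp (fun ω => νhat ω i) 2 μP)
    (hunbias : ∀ i, ∫ ω, νhat ω i ∂μP = ν i)
    (hvar : ∫ ω, (νhat ω - ν) ⬝ᵥ (νhat ω - ν) ∂μP ≤ δ * ((ν - Hyt) ⬝ᵥ (ν - Hyt)))
    -- the updates
    (Dnext yhat ynext Hnext : Ω → Fin m → ℝ)
    (hD : ∀ ω, Dnext ω = Dyt + (γy / (2 * s)) • (1 - W).mulVec (νhat ω))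
    (hyhat : ∀ ω, yhat ω = ν - (γy / 2) • (1 - W).mulVec (νhat ω))
    (hynext : ∀ ω i, ynext ω i = prox (yhat ω i))
    (hH : ∀ ω, Hnext ω = (1 - αy) • Hyt + αy • νhat ω) :
    My * ∫ ω, (ynext ω - fun _ => ystar) ⬝ᵥ (ynext ω - fun _ => ystar) ∂μP
      + (2 * s ^ 2 / γy) * ∫ ω, (Dnext ω - Dstar) ⬝ᵥ P.mulVec (Dnext ω - Dstar) ∂μP
      + Real.sqrt δ * ∫ ω, (Hnext ω - Hstar) ⬝ᵥ (Hnext ω - Hstar) ∂μP ≤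
    ((yt - fun _ => ystar) + s • Gy - s • fun i => deriv (f i xstar) ystar) ⬝ᵥ
        ((yt - fun _ => ystar) + s • Gy - s • fun i => deriv (f i xstar) ystar)
      + (2 * s ^ 2 / γy) * (1 - (γy / 2) * l2) * ((Dyt - Dstar) ⬝ᵥ P.mulVec (Dyt - Dstar))
      + Real.sqrt δ * (1 - αy) * ((Hyt - Hstar) ⬝ᵥ (Hyt - Hstar)) := by
  set L := 1 - W with hLdef
  have hL1 : L *ᵥ (fun _ => 1) = 0 := by rw [hLdef, sub_mulVec, one_mulVec, hW1, sub_self]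
  have hLH : L *ᵥ Hstar = 0 := by
    rw [hHstar, ← mul_one (ystar + _), ← smul_eq_mul, ← Pi.smul_def, mulVec_smul, hL1, smul_zero]
  obtain ⟨u, hu⟩ := hDrange
  set e := ν - Hstar
  set h := Hyt - Hstar
  set z : Ω → Fin m → ℝ := fun ω => νhat ω - ν
  have hz : ∀ i, MemLp (fun ω => z ω i) 2 μP := fun i => (hνhatL2 i).sub (memLp_const _)
  have hz0 : ∀ i, ∫ ω, z ω i ∂μP = 0 := fun i => by
    simp [z, integral_sub ((hνhatL2 i).integrable one_le_two) (integrable_const _), hunbias]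
  have hLνhat : ∀ ω, L *ᵥ νhat ω = L *ᵥ e + L *ᵥ z ω := fun ω => by
    rw [← mulVec_add, show νhat ω = Hstar + (e + z ω) by simp only [e, z]; abel, mulVec_add,
      hLH, zero_add]
  have hprox_lip := ((hr.subset (Set.subset_univ Y) hYcv).smul hs.le).lipschitzWith_prox
    fun u => ⟨(hprox u).1, isMinOn_iff.mpr (hprox u).2⟩
  have hY : ∀ ω, (ynext ω - fun _ => ystar) ⬝ᵥ (ynext ω - fun _ => ystar)
      ≤ (e - (γy / 2) • L *ᵥ e + (-(γy / 2)) • L *ᵥ z ω)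
        ⬝ᵥ (e - (γy / 2) • L *ᵥ e + (-(γy / 2)) • L *ᵥ z ω) := fun ω => by
    have hyhat' : yhat ω - Hstar = e - (γy / 2) • L *ᵥ e + (-(γy / 2)) • L *ᵥ z ω := by
      rw [hyhat, hLνhat]
      simp only [e]
      module
    rw [← hyhat', show ynext ω - (fun _ => ystar) = prox ∘ yhat ω - prox ∘ Hstar from
      funext fun i => by simp [hynext, hHstar, ← hfix]]
    exact hprox_lip.comp_sub_dotProduct_le _ _
  have hrhs : ((yt - fun _ => ystar) + s • Gy - s • fun i => deriv (f i xstar) ystar)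
      = e + s • L *ᵥ u := by
    rw [hu]
    funext i
    simp [e, hν, hHstar, hDstar]
    ring
  rw [hrhs, ← hu]
  refine one_step_bound hIWpsd hL1 hPgi hlmax hl2 hs hγy0 hδ.1 hαy.1 hγy1 hγy2 hMy hz hz0
    (by simpa only [e, h, sub_sub_sub_cancel_right] using hvar) hY (fun ω => ?_) (fun ω => ?_)
  · rw [hD, hLνhat, mulVec_add, mulVec_add, mulVec_smul, mulVec_smul, hu]
    module
  · rw [hH]
    simp only [h, e, z]
    module

/-- One-step progress of the compressed dual update (Lemma `recursion_y`, scalar blocks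
`d_y = 1`).  `P` plays the role of the pseudoinverse `(I-W)†` and `‖v‖²_P = vᵀ P v`;
`lmax` and `l2` are the largest and second-smallest eigenvalues of `I - W`, characterized
by their Rayleigh-quotient extremal properties. -/
theorem one_step_progress_compressed_dual_update {m : ℕ} (hm : 0 < m)
    (W : Matrix (Fin m) (Fin m) ℝ) (hWsymm : W.IsSymm)
    (hW1 : W.mulVec (fun _ => (1 : ℝ)) = fun _ => (1 : ℝ))
    (hIWpsd : (1 - W).PosSemidef) (hIWpd : (1 + W).PosDef)
    (lmax l2 : ℝ)
    (hlmax : IsGreatest {t : ℝ | ∃ v : Fin m → ℝ, v ⬝ᵥ v = 1 ∧ t = v ⬝ᵥ (1 - W).mulVec v} lmax)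
    (hl2 : IsLeast {t : ℝ | ∃ v : Fin m → ℝ,
        v ⬝ᵥ v = 1 ∧ (∑ i, v i) = 0 ∧ t = v ⬝ᵥ (1 - W).mulVec v} l2)
    -- a symmetric PSD generalized inverse of `I - W`
    (P : Matrix (Fin m) (Fin m) ℝ) (hPpsd : P.PosSemidef)
    (hPgi : (1 - W) * P * (1 - W) = 1 - W)
    -- the proximal map of `s·r` over `Y`
    (r : ℝ → ℝ) (hr : ConvexOn ℝ Set.univ r) (hrc : Continuous r)
    (Y : Set ℝ) (hYne : Y.Nonempty) (hYcl : IsClosed Y) (hYcv : Convex ℝ Y)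
    (s : ℝ) (hs : 0 < s)
    (prox : ℝ → ℝ)
    (hprox : ∀ u : ℝ, prox u ∈ Y ∧ ∀ w ∈ Y,
        s * r (prox u) + (1 / 2) * (prox u - u) ^ 2 ≤ s * r w + (1 / 2) * (w - u) ^ 2)
    -- the local functions and the fixed point
    (f : Fin m → ℝ → ℝ → ℝ) (hfdiff : ∀ i x, Differentiable ℝ (f i x))
    (xstar ystar : ℝ)
    (hfix : ystar = prox (ystar + (s / (m : ℝ)) * ∑ i, deriv (f i xstar) ystar))
    (Dstar Hstar : Fin m → ℝ)
    (hDstar : Dstar = fun i => deriv (f i xstar) ystar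
        - (1 / (m : ℝ)) * ∑ j, deriv (f j xstar) ystar)
    (hHstar : Hstar = fun _ => ystar + (s / (m : ℝ)) * ∑ i, deriv (f i xstar) ystar)
    -- the compression and step-size parameters
    (δ αy γy : ℝ) (hδ : δ ∈ Set.Icc (0 : ℝ) 1)
    (hαy : αy ∈ Set.Ioo (0 : ℝ) (1 / (1 + δ)))
    (hγy0 : 0 < γy) (hγy1 : γy * lmax < 2 - 2 * Real.sqrt δ * αy)
    (hγy2 : Real.sqrt δ * γy * lmax < αy - (1 + δ) * αy ^ 2)
    (My : ℝ) (hMy : My = 1 - Real.sqrt δ * αy / (1 - (γy / 2) * lmax))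
    -- deterministic data of the current step
    (yt Gy Dyt Hyt : Fin m → ℝ)
    (hDrange : Dyt - Dstar ∈ Set.range (1 - W).mulVec)
    (ν : Fin m → ℝ) (hν : ν = yt + s • Gy - s • Dyt)
    -- the stochastic compressed vector
    {Ω : Type*} [MeasurableSpace Ω] (μP : Measure Ω) [IsProbabilityMeasure μP]
    (νhat : Ω → Fin m → ℝ)
    (hνhatL2 : ∀ i, MemLp (fun ω => νhat ω i) 2 μP)
    (hunbias : ∀ i, ∫ ω, νhat ω i ∂μP = ν i)
    (hvar : ∫ ω, (νhat ω - ν) ⬝ᵥ (νhat ω - ν) ∂μP ≤ δ * ((ν - Hyt) ⬝ᵥ (ν - Hyt)))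
    -- the updates
    (Dnext yhat ynext Hnext : Ω → Fin m → ℝ)
    (hD : ∀ ω, Dnext ω = Dyt + (γy / (2 * s)) • (1 - W).mulVec (νhat ω))
    (hyhat : ∀ ω, yhat ω = ν - (γy / 2) • (1 - W).mulVec (νhat ω))
    (hynext : ∀ ω i, ynext ω i = prox (yhat ω i))
    (hH : ∀ ω, Hnext ω = (1 - αy) • Hyt + αy • νhat ω) :
    My * ∫ ω, (ynext ω - fun _ => ystar) ⬝ᵥ (ynext ω - fun _ => ystar) ∂μP
      + (2 * s ^ 2 / γy) * ∫ ω, (Dnext ω - Dstar) ⬝ᵥ P.mulVec (Dnext ω - Dstar) ∂μP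
      + Real.sqrt δ * ∫ ω, (Hnext ω - Hstar) ⬝ᵥ (Hnext ω - Hstar) ∂μP ≤
    ((yt - fun _ => ystar) + s • Gy - s • fun i => deriv (f i xstar) ystar) ⬝ᵥ
        ((yt - fun _ => ystar) + s • Gy - s • fun i => deriv (f i xstar) ystar)
      + (2 * s ^ 2 / γy) * (1 - (γy / 2) * l2) * ((Dyt - Dstar) ⬝ᵥ P.mulVec (Dyt - Dstar))
      + Real.sqrt δ * (1 - αy) * ((Hyt - Hstar) ⬝ᵥ (Hyt - Hstar)) :=
  one_step_progress_compressed_dual_update_general W hW1 hIWpsd lmax l2 hlmax hl2 P hPgi r hr Y hYcv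
    s hs prox hprox f xstar ystar hfix Dstar Hstar hDstar hHstar δ αy γy hδ hαy hγy0 hγy1 hγy2 My
    hMy yt Gy Dyt Hyt hDrange ν hν μP νhat hνhatL2 hunbias hvar Dnext yhat ynext Hnext hD hyhat
    hynext hH
end

section
/- One-step stochastic-gradient bounds (Lemma `exp_ykt_ystar_xkt_xstar`). For i = 1,…,m let f_i : ℝ^{d_x} × ℝ^{d_y} → ℝ be differentiable, μ_x-strongly convex in x for each fixed y and μ_y-strongly concave in y for each fixed x. Let ξ¹,…,ξ^m be random elements and suppose stochastic gradients ∇_x f_i(x,y;ξⁱ), ∇_y f_i(x,y;ξⁱ) satisfy, for all (x,y,x₁,x₂,y₁,y₂): unbiasedness E[∇_x f_i(x,y;ξⁱ)] = ∇_x f_i(x,y) and E[∇_y f_i(x,y;ξⁱ)] = ∇_y f_i(x,y); variance bounds at the point z⋆ = (x⋆,y⋆): E‖∇_x f_i(z⋆;ξⁱ) − ∇_x f_i(z⋆)‖² ≤ σ_x² and E‖∇_y f_i(z⋆;ξⁱ) − ∇_y f_i(z⋆)‖² ≤ σ_y²; expected smoothness E‖∇_x f_i(x₁,y;ξⁱ)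 − ∇_x f_i(x₂,y;ξⁱ)‖² ≤ 2L_xx·V_{f_i,y}(x₁,x₂) and E‖−∇_y f_i(x,y₁;ξⁱ) + ∇_y f_i(x,y₂;ξⁱ)‖² ≤ 2L_yy·V_{−f_i,x}(y₁,y₂); and cross-terms E‖∇_x f_i(x,y₁;ξⁱ) − ∇_x f_i(x,y₂;ξⁱ)‖² ≤ L_xy²‖y₁−y₂‖², E‖∇_y f_i(x₁,y;ξⁱ) − ∇_y f_i(x₂,y;ξⁱ)‖² ≤ L_yx²‖x₁−x₂‖². Let x_t ∈ ℝ^{md_x}, y_t ∈ ℝ^{md_y} be deterministic stacked vectors with blocks x^i_t, y^i_t, z^i_t = (x^i_t,y^i_t), and set G^x := (∇_x f_1(z¹_t;ξ¹),…,∇_x f_m(z^m_t;ξ^m)), G^y := (∇_y f_1(z¹_t;ξ¹),…,∇_y f_m(z^m_t;ξ^m)). Then for every s > 0: (i) E‖x_t − 𝟙x⋆ − sG^x + s∇_x F(𝟙x⋆,𝟙y⋆)‖² ≤ (1−μ_x s)‖x_t−𝟙x⋆‖² + 4s²L_xy²‖y_t−𝟙y⋆‖² − (2s − 8s²L_xx)·Σᵢ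 V_{f_i,y^i_t}(x⋆,x^i_t) + 2s·(F(x_t,𝟙y⋆) − F(𝟙x⋆,𝟙y⋆) + F(𝟙x⋆,y_t) − F(x_t,y_t)) + 2ms²σ_x²; and (ii) E‖y_t − 𝟙y⋆ + sG^y − s∇_y F(𝟙x⋆,𝟙y⋆)‖² ≤ (1−μ_y s)‖y_t−𝟙y⋆‖² + 4s²L_yx²‖x_t−𝟙x⋆‖² − (2s − 8s²L_yy)·Σᵢ V_{−f_i,x^i_t}(y⋆,y^i_t) + 2s·(−F(x_t,𝟙y⋆) + F(𝟙x⋆,𝟙y⋆) − F(𝟙x⋆,y_t) + F(x_t,y_t)) + 2ms²σ_y². -/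
/-!
Per block, write the step as `a - s • (G - g⋆)` with `a = xₜ - x⋆` and `g⋆` the gradient at the
saddle point. Its expected square is `‖a‖² - 2s⟪a, ∇f(xₜ, yₜ) - g⋆⟫ + s² E‖G - g⋆‖²`. The inner
product splits into a Bregman divergence plus function values, and strong convexity at `(x⋆, y⋆)`
bounds the remaining `⟪g⋆, a⟫`. The second moment is split along
`(xₜ, yₜ) → (x⋆, yₜ) → (x⋆, y⋆)` and bounded by expected smoothness, the cross bound and the
variance at the saddle point, via `‖u + v + w‖² ≤ 4‖u‖² + 4‖v‖² + 2‖w‖²`. The dual block is the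
primal one for `-f` with the variables swapped. Summing over the blocks gives the stacked bounds.
-/

open MeasureTheory RealInnerProductSpace

theorem norm_add_sq_le_two_mul {E : Type*} [SeminormedAddCommGroup E] (a b : E) :
    ‖a + b‖ ^ 2 ≤ 2 * (‖a‖ ^ 2 + ‖b‖ ^ 2) :=
  (pow_le_pow_left₀ (norm_nonneg _) (norm_add_le a b) 2).trans add_sq_le

theorem MeasureTheory.MemLp.integrable_norm_sq {Ω E : Type*} [MeasurableSpace Ω] {μ : Measure Ω}
    [NormedAddCommGroup E] {X : Ω → E} (hX : MemLp X 2 μ) :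
    Integrable (fun ω => ‖X ω‖ ^ 2) μ :=
  hX.integrable_norm_pow two_ne_zero

section

variable {Ω E F : Type*} [MeasurableSpace Ω] {μ : Measure Ω}

theorem integral_norm_add_add_sq_le [NormedAddCommGroup E] {u v w : Ω → E}
    (hu : MemLp u 2 μ) (hv : MemLp v 2 μ) (hw : MemLp w 2 μ) :
    ∫ ω, ‖u ω + v ω + w ω‖ ^ 2 ∂μ ≤
      4 * ∫ ω, ‖u ω‖ ^ 2 ∂μ + 4 * ∫ ω, ‖v ω‖ ^ 2 ∂μ + 2 * ∫ ω, ‖w ω‖ ^ 2 ∂μ := by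
  have hu' := hu.integrable_norm_sq.const_mul 4
  have hv' := hv.integrable_norm_sq.const_mul 4
  have hw' := hw.integrable_norm_sq.const_mul 2
  calc ∫ ω, ‖u ω + v ω + w ω‖ ^ 2 ∂μ
      ≤ ∫ ω, (4 * ‖u ω‖ ^ 2 + 4 * ‖v ω‖ ^ 2 + 2 * ‖w ω‖ ^ 2) ∂μ := by
        refine integral_mono ((hu.add hv).add hw).integrable_norm_sq ((hu'.add hv').add hw')
          fun ω => ?_
        have := norm_add_sq_le_two_mul (u ω) (v ω)
        have := norm_add_sq_le_two_mul (u ω + v ω) (w ω)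
        linarith
    _ = _ := by
        rw [integral_add ?_ hw', integral_add hu' hv', integral_const_mul, integral_const_mul,
          integral_const_mul]
        exact hu'.add hv'

variable [IsProbabilityMeasure μ]

theorem integral_norm_sub_smul_sq [NormedAddCommGroup E] [InnerProductSpace ℝ E] [CompleteSpace E]
    (a : E) (s : ℝ) {X : Ω → E} (hX : MemLp X 2 μ) :
    ∫ ω, ‖a - s • X ω‖ ^ 2 ∂μ
      = ‖a‖ ^ 2 - 2 * s * ⟪a, ∫ ω, X ω ∂μ⟫ + s ^ 2 * ∫ ω, ‖X ω‖ ^ 2 ∂μ := by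
  have hX1 : Integrable X μ := hX.integrable one_le_two
  have hexpand : ∀ ω, ‖a - s • X ω‖ ^ 2 = ‖a‖ ^ 2 - 2 * s * ⟪a, X ω⟫ + s ^ 2 * ‖X ω‖ ^ 2 := by
    intro ω
    rw [norm_sub_sq_real, real_inner_smul_right, norm_smul, mul_pow, Real.norm_eq_abs, sq_abs]
    ring
  simp only [hexpand]
  have hinner := (hX1.const_inner a).const_mul (2 * s)
  rw [integral_add ?_ (hX.integrable_norm_sq.const_mul _),
    integral_sub (integrable_const _) hinner, integral_const_mul, integral_const_mul,
    integral_inner hX1, integral_const, probReal_univ, one_smul]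
  exact (integrable_const _).sub hinner

theorem integral_norm_descent_step_sq_le [NormedAddCommGroup E] [InnerProductSpace ℝ E]
    [CompleteSpace E] [NormedAddCommGroup F] (f : E → F → ℝ) (g : E → F → E)
    (G : E → F → Ω → E) (hG : ∀ x y, MemLp (G x y) 2 μ) {x xs : E} {y ys : F}
    {μf L₁ L₂ σ s : ℝ} (hs : 0 < s) (hmean : ∫ ω, G x y ω ∂μ = g x y)
    (hsmooth : ∫ ω, ‖G xs y ω - G x y ω‖ ^ 2 ∂μ ≤
      2 * L₁ * (f xs y - f x y - ⟪g x y, xs - x⟫))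
    (hcross : ∫ ω, ‖G xs y ω - G xs ys ω‖ ^ 2 ∂μ ≤ L₂ ^ 2 * ‖y - ys‖ ^ 2)
    (hvar : ∫ ω, ‖G xs ys ω - g xs ys‖ ^ 2 ∂μ ≤ σ ^ 2)
    (hconvex : f xs ys + ⟪g xs ys, x - xs⟫ + μf / 2 * ‖x - xs‖ ^ 2 ≤ f x ys) :
    ∫ ω, ‖x - xs - s • G x y ω + s • g xs ys‖ ^ 2 ∂μ ≤
      (1 - μf * s) * ‖x - xs‖ ^ 2 + 4 * s ^ 2 * L₂ ^ 2 * ‖y - ys‖ ^ 2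
        - (2 * s - 8 * s ^ 2 * L₁) * (f xs y - f x y - ⟪g x y, xs - x⟫)
        + 2 * s * (f x ys - f xs ys + f xs y - f x y) + 2 * s ^ 2 * σ ^ 2 := by
  set V := f xs y - f x y - ⟪g x y, xs - x⟫
  have hmoment : ∫ ω, ‖G x y ω - g xs ys‖ ^ 2 ∂μ ≤ 8 * L₁ * V + 4 * L₂ ^ 2 * ‖y - ys‖ ^ 2
      + 2 * σ ^ 2 := by
    have hsplit := integral_norm_add_add_sq_le ((hG x y).sub (hG xs y))
      ((hG xs y).sub (hG xs ys)) ((hG xs ys).sub (memLp_const (g xs ys)))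
    simp only [Pi.sub_apply, sub_add_sub_cancel, norm_sub_rev (G x y _) (G xs y _)] at hsplit
    linarith
  have hinner : ⟪x - xs, g x y - g xs ys⟫ = V - f xs y + f x y - ⟪g xs ys, x - xs⟫ := by
    simp only [V, inner_sub_left, inner_sub_right, real_inner_comm x, real_inner_comm xs]
    ring
  have hstep : ∀ ω, x - xs - s • G x y ω + s • g xs ys = (x - xs) - s • (G x y ω - g xs ys) := by
    intro ω
    rw [smul_sub]
    abel
  have hdev : MemLp (fun ω => G x y ω - g xs ys) 2 μ := (hG x y).sub (memLp_const _)
  simp only [hstep]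
  rw [integral_norm_sub_smul_sq _ _ hdev,
    integral_sub ((hG x y).integrable one_le_two) (integrable_const _), hmean, integral_const,
    probReal_univ, one_smul, hinner]
  nlinarith [mul_le_mul_of_nonneg_left hmoment (sq_nonneg s),
    mul_le_mul_of_nonneg_left hconvex (by positivity : (0 : ℝ) ≤ 2 * s)]

theorem integral_norm_ascent_step_sq_le [NormedAddCommGroup E] [NormedAddCommGroup F]
    [InnerProductSpace ℝ F] [CompleteSpace F]
    (f : E → F → ℝ) (g : E → F → F) (G : E → F → Ω → F) (hG : ∀ x y, MemLp (G x y) 2 μ)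
    {x xs : E} {y ys : F} {μf L₁ L₂ σ s : ℝ} (hs : 0 < s) (hmean : ∫ ω, G x y ω ∂μ = g x y)
    (hsmooth : ∫ ω, ‖G x ys ω - G x y ω‖ ^ 2 ∂μ ≤
      2 * L₁ * (-f x ys + f x y + ⟪g x y, ys - y⟫))
    (hcross : ∫ ω, ‖G x ys ω - G xs ys ω‖ ^ 2 ∂μ ≤ L₂ ^ 2 * ‖x - xs‖ ^ 2)
    (hvar : ∫ ω, ‖G xs ys ω - g xs ys‖ ^ 2 ∂μ ≤ σ ^ 2)
    (hconcave : f xs y ≤ f xs ys + ⟪g xs ys, y - ys⟫ - μf / 2 * ‖y - ys‖ ^ 2) :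
    ∫ ω, ‖y - ys + s • G x y ω - s • g xs ys‖ ^ 2 ∂μ ≤
      (1 - μf * s) * ‖y - ys‖ ^ 2 + 4 * s ^ 2 * L₂ ^ 2 * ‖x - xs‖ ^ 2
        - (2 * s - 8 * s ^ 2 * L₁) * (-f x ys + f x y + ⟪g x y, ys - y⟫)
        + 2 * s * (-f x ys + f xs ys - f xs y + f x y) + 2 * s ^ 2 * σ ^ 2 := by
  have hneg : ∀ a b : F, ‖-a - -b‖ = ‖a - b‖ := fun a b => by rw [neg_sub_neg, norm_sub_rev]
  have key := integral_norm_descent_step_sq_le (fun y x => -f x y) (fun y x => -g x y)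
    (fun y x ω => -G x y ω) (fun y x => (hG x y).neg) (xs := ys) (ys := xs) (μf := μf)
    (L₁ := L₁) (L₂ := L₂) (σ := σ) hs (by rw [integral_neg, hmean])
    (by simp only [hneg, inner_neg_left]; rwa [sub_neg_eq_add, sub_neg_eq_add])
    (by simpa only [hneg] using hcross) (by simpa only [hneg] using hvar)
    (by rw [inner_neg_left]; linarith)
  simp only [smul_neg, sub_neg_eq_add, ← sub_eq_add_neg, inner_neg_left] at key
  linarith

end

theorem one_step_stochastic_gradient_bounds_general {dx dy m : ℕ}
    {Ω : Type*} [MeasurableSpace Ω] (μP : Measure Ω) [IsProbabilityMeasure μP]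
    (f : Fin m → EuclideanSpace ℝ (Fin dx) → EuclideanSpace ℝ (Fin dy) → ℝ)
    (μx μy : ℝ)
    -- strong convexity in x and strong concavity in y of each `f_i`
    (hsc : ∀ i y x₁ x₂, f i x₂ y + ⟪gradient (fun x => f i x y) x₂, x₁ - x₂⟫
        + μx / 2 * ‖x₁ - x₂‖ ^ 2 ≤ f i x₁ y)
    (hscc : ∀ i x y₁ y₂, f i x y₁ ≤ f i x y₂ + ⟪gradient (fun y => f i x y) y₂, y₁ - y₂⟫
        - μy / 2 * ‖y₁ - y₂‖ ^ 2)
    -- stochastic gradient oracles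
    (gx : Fin m → EuclideanSpace ℝ (Fin dx) → EuclideanSpace ℝ (Fin dy) → Ω →
        EuclideanSpace ℝ (Fin dx))
    (gy : Fin m → EuclideanSpace ℝ (Fin dx) → EuclideanSpace ℝ (Fin dy) → Ω →
        EuclideanSpace ℝ (Fin dy))
    (hgxL2 : ∀ i x y, MemLp (gx i x y) 2 μP)
    (hgyL2 : ∀ i x y, MemLp (gy i x y) 2 μP)
    -- unbiasedness
    (hgxu : ∀ i x y, ∫ ω, gx i x y ω ∂μP = gradient (fun x' => f i x' y) x)
    (hgyu : ∀ i x y, ∫ ω, gy i x y ω ∂μP = gradient (fun y' => f i x y') y)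
    -- variance bounds at the saddle point `z⋆ = (x⋆, y⋆)`
    (xs : EuclideanSpace ℝ (Fin dx)) (ys : EuclideanSpace ℝ (Fin dy)) (σx σy : ℝ)
    (hvarx : ∀ i, ∫ ω, ‖gx i xs ys ω - gradient (fun x' => f i x' ys) xs‖ ^ 2 ∂μP ≤ σx ^ 2)
    (hvary : ∀ i, ∫ ω, ‖gy i xs ys ω - gradient (fun y' => f i xs y') ys‖ ^ 2 ∂μP ≤ σy ^ 2)
    -- expected smoothness and cross-Lipschitz bounds
    (Lxx Lyy Lxy Lyx : ℝ)
    (hsmx : ∀ i y x₁ x₂, ∫ ω, ‖gx i x₁ y ω - gx i x₂ y ω‖ ^ 2 ∂μP ≤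
        2 * Lxx * (f i x₁ y - f i x₂ y - ⟪gradient (fun x => f i x y) x₂, x₁ - x₂⟫))
    (hsmy : ∀ i x y₁ y₂, ∫ ω, ‖gy i x y₁ ω - gy i x y₂ ω‖ ^ 2 ∂μP ≤
        2 * Lyy * (-(f i x y₁) + f i x y₂ + ⟪gradient (fun y => f i x y) y₂, y₁ - y₂⟫))
    (hcrossx : ∀ i x y₁ y₂, ∫ ω, ‖gx i x y₁ ω - gx i x y₂ ω‖ ^ 2 ∂μP ≤
        Lxy ^ 2 * ‖y₁ - y₂‖ ^ 2)
    (hcrossy : ∀ i y x₁ x₂, ∫ ω, ‖gy i x₁ y ω - gy i x₂ y ω‖ ^ 2 ∂μP ≤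
        Lyx ^ 2 * ‖x₁ - x₂‖ ^ 2)
    -- deterministic stacked iterates
    (xt : Fin m → EuclideanSpace ℝ (Fin dx)) (yt : Fin m → EuclideanSpace ℝ (Fin dy))
    (s : ℝ) (hs : 0 < s) :
    (∫ ω, ∑ i, ‖xt i - xs - s • gx i (xt i) (yt i) ω
          + s • gradient (fun x' => f i x' ys) xs‖ ^ 2 ∂μP ≤
        (1 - μx * s) * ∑ i, ‖xt i - xs‖ ^ 2
          + 4 * s ^ 2 * Lxy ^ 2 * ∑ i, ‖yt i - ys‖ ^ 2
          - (2 * s - 8 * s ^ 2 * Lxx) *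
              ∑ i, (f i xs (yt i) - f i (xt i) (yt i)
                - ⟪gradient (fun x => f i x (yt i)) (xt i), xs - xt i⟫)
          + 2 * s * ((∑ i, f i (xt i) ys) - (∑ i, f i xs ys)
              + (∑ i, f i xs (yt i)) - ∑ i, f i (xt i) (yt i))
          + 2 * (m : ℝ) * s ^ 2 * σx ^ 2) ∧
      (∫ ω, ∑ i, ‖yt i - ys + s • gy i (xt i) (yt i) ω
          - s • gradient (fun y' => f i xs y') ys‖ ^ 2 ∂μP ≤
        (1 - μy * s) * ∑ i, ‖yt i - ys‖ ^ 2
          + 4 * s ^ 2 * Lyx ^ 2 * ∑ i, ‖xt i - xs‖ ^ 2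
          - (2 * s - 8 * s ^ 2 * Lyy) *
              ∑ i, (-(f i (xt i) ys) + f i (xt i) (yt i)
                + ⟪gradient (fun y => f i (xt i) y) (yt i), ys - yt i⟫)
          + 2 * s * (-(∑ i, f i (xt i) ys) + (∑ i, f i xs ys)
              - (∑ i, f i xs (yt i)) + ∑ i, f i (xt i) (yt i))
          + 2 * (m : ℝ) * s ^ 2 * σy ^ 2) := by
  have hx_int : ∀ i, Integrable (fun ω => ‖xt i - xs - s • gx i (xt i) (yt i) ω
      + s • gradient (fun x' => f i x' ys) xs‖ ^ 2) μP := fun i =>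
    (((memLp_const _).sub ((hgxL2 i _ _).const_smul s)).add (memLp_const _)).integrable_norm_sq
  have hy_int : ∀ i, Integrable (fun ω => ‖yt i - ys + s • gy i (xt i) (yt i) ω
      - s • gradient (fun y' => f i xs y') ys‖ ^ 2) μP := fun i =>
    (((memLp_const (yt i - ys)).add ((hgyL2 i _ _).const_smul s)).sub
      (memLp_const _)).integrable_norm_sq
  constructor
  · refine (integral_finsetSum _ fun i _ => hx_int i).trans_le
      ((Finset.sum_le_sum fun i _ => integral_norm_descent_step_sq_le (f i)
        (fun x y => gradient (fun x' => f i x' y) x) (gx i) (hgxL2 i)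
        hs (hgxu i _ _) (hsmx i _ _ _) (hcrossx i _ _ _) (hvarx i) (hsc i _ _ _)).trans_eq ?_)
    simp only [Finset.sum_add_distrib, Finset.sum_sub_distrib, ← Finset.mul_sum,
      Finset.sum_const, Finset.card_univ, Fintype.card_fin, nsmul_eq_mul]
    ring
  · refine (integral_finsetSum _ fun i _ => hy_int i).trans_le
      ((Finset.sum_le_sum fun i _ => integral_norm_ascent_step_sq_le (f i)
        (fun x y => gradient (fun y' => f i x y') y) (gy i) (hgyL2 i)
        hs (hgyu i _ _) (hsmy i _ _ _) (hcrossy i _ _ _) (hvary i) (hscc i _ _ _)).trans_eq ?_)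
    simp only [Finset.sum_add_distrib, Finset.sum_sub_distrib, Finset.sum_neg_distrib,
      ← Finset.mul_sum, Finset.sum_const, Finset.card_univ, Fintype.card_fin, nsmul_eq_mul]
    ring

/-- One-step stochastic-gradient bounds (Lemma `exp_ykt_ystar_xkt_xstar`): under strong
convexity/concavity of each `f_i`, unbiasedness, variance bounds at `z⋆ = (x⋆, y⋆)`,
expected smoothness, and cross-Lipschitz bounds on the stochastic gradients, the
expected squared distances of the stochastic gradient steps satisfy the bounds (i)
for the primal block and (ii) for the dual block. -/
theorem one_step_stochastic_gradient_bounds {dx dy m : ℕ}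
    {Ω : Type*} [MeasurableSpace Ω] (μP : Measure Ω) [IsProbabilityMeasure μP]
    (f : Fin m → EuclideanSpace ℝ (Fin dx) → EuclideanSpace ℝ (Fin dy) → ℝ)
    (hdx : ∀ i y, Differentiable ℝ (fun x => f i x y))
    (hdy : ∀ i x, Differentiable ℝ (fun y => f i x y))
    (μx μy : ℝ)
    -- strong convexity in x and strong concavity in y of each `f_i`
    (hsc : ∀ i y x₁ x₂, f i x₂ y + ⟪gradient (fun x => f i x y) x₂, x₁ - x₂⟫
        + μx / 2 * ‖x₁ - x₂‖ ^ 2 ≤ f i x₁ y)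
    (hscc : ∀ i x y₁ y₂, f i x y₁ ≤ f i x y₂ + ⟪gradient (fun y => f i x y) y₂, y₁ - y₂⟫
        - μy / 2 * ‖y₁ - y₂‖ ^ 2)
    -- stochastic gradient oracles
    (gx : Fin m → EuclideanSpace ℝ (Fin dx) → EuclideanSpace ℝ (Fin dy) → Ω →
        EuclideanSpace ℝ (Fin dx))
    (gy : Fin m → EuclideanSpace ℝ (Fin dx) → EuclideanSpace ℝ (Fin dy) → Ω →
        EuclideanSpace ℝ (Fin dy))
    (hgxL2 : ∀ i x y, MemLp (gx i x y) 2 μP)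
    (hgyL2 : ∀ i x y, MemLp (gy i x y) 2 μP)
    -- unbiasedness
    (hgxu : ∀ i x y, ∫ ω, gx i x y ω ∂μP = gradient (fun x' => f i x' y) x)
    (hgyu : ∀ i x y, ∫ ω, gy i x y ω ∂μP = gradient (fun y' => f i x y') y)
    -- variance bounds at the saddle point `z⋆ = (x⋆, y⋆)`
    (xs : EuclideanSpace ℝ (Fin dx)) (ys : EuclideanSpace ℝ (Fin dy)) (σx σy : ℝ)
    (hvarx : ∀ i, ∫ ω, ‖gx i xs ys ω - gradient (fun x' => f i x' ys) xs‖ ^ 2 ∂μP ≤ σx ^ 2)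
    (hvary : ∀ i, ∫ ω, ‖gy i xs ys ω - gradient (fun y' => f i xs y') ys‖ ^ 2 ∂μP ≤ σy ^ 2)
    -- expected smoothness and cross-Lipschitz bounds
    (Lxx Lyy Lxy Lyx : ℝ)
    (hsmx : ∀ i y x₁ x₂, ∫ ω, ‖gx i x₁ y ω - gx i x₂ y ω‖ ^ 2 ∂μP ≤
        2 * Lxx * (f i x₁ y - f i x₂ y - ⟪gradient (fun x => f i x y) x₂, x₁ - x₂⟫))
    (hsmy : ∀ i x y₁ y₂, ∫ ω, ‖gy i x y₁ ω - gy i x y₂ ω‖ ^ 2 ∂μP ≤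
        2 * Lyy * (-(f i x y₁) + f i x y₂ + ⟪gradient (fun y => f i x y) y₂, y₁ - y₂⟫))
    (hcrossx : ∀ i x y₁ y₂, ∫ ω, ‖gx i x y₁ ω - gx i x y₂ ω‖ ^ 2 ∂μP ≤
        Lxy ^ 2 * ‖y₁ - y₂‖ ^ 2)
    (hcrossy : ∀ i y x₁ x₂, ∫ ω, ‖gy i x₁ y ω - gy i x₂ y ω‖ ^ 2 ∂μP ≤
        Lyx ^ 2 * ‖x₁ - x₂‖ ^ 2)
    -- deterministic stacked iterates
    (xt : Fin m → EuclideanSpace ℝ (Fin dx)) (yt : Fin m → EuclideanSpace ℝ (Fin dy))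
    (s : ℝ) (hs : 0 < s) :
    (∫ ω, ∑ i, ‖xt i - xs - s • gx i (xt i) (yt i) ω
          + s • gradient (fun x' => f i x' ys) xs‖ ^ 2 ∂μP ≤
        (1 - μx * s) * ∑ i, ‖xt i - xs‖ ^ 2
          + 4 * s ^ 2 * Lxy ^ 2 * ∑ i, ‖yt i - ys‖ ^ 2
          - (2 * s - 8 * s ^ 2 * Lxx) *
              ∑ i, (f i xs (yt i) - f i (xt i) (yt i)
                - ⟪gradient (fun x => f i x (yt i)) (xt i), xs - xt i⟫)
          + 2 * s * ((∑ i, f i (xt i) ys) - (∑ i, f i xs ys)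
              + (∑ i, f i xs (yt i)) - ∑ i, f i (xt i) (yt i))
          + 2 * (m : ℝ) * s ^ 2 * σx ^ 2) ∧
      (∫ ω, ∑ i, ‖yt i - ys + s • gy i (xt i) (yt i) ω
          - s • gradient (fun y' => f i xs y') ys‖ ^ 2 ∂μP ≤
        (1 - μy * s) * ∑ i, ‖yt i - ys‖ ^ 2
          + 4 * s ^ 2 * Lyx ^ 2 * ∑ i, ‖xt i - xs‖ ^ 2
          - (2 * s - 8 * s ^ 2 * Lyy) *
              ∑ i, (-(f i (xt i) ys) + f i (xt i) (yt i)
                + ⟪gradient (fun y => f i (xt i) y) (yt i), ys - yt i⟫)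
          + 2 * s * (-(∑ i, f i (xt i) ys) + (∑ i, f i xs ys)
              - (∑ i, f i xs (yt i)) + ∑ i, f i (xt i) (yt i))
          + 2 * (m : ℝ) * s ^ 2 * σy ^ 2) :=
  one_step_stochastic_gradient_bounds_general μP f μx μy hsc hscc gx gy hgxL2 hgyL2 hgxu hgyu xs ys
    σx σy hvarx hvary Lxx Lyy Lxy Lyx hsmx hsmy hcrossx hcrossy xt yt s hs
end

section
/- Contraction-factor inequality for the compression parameters (C-RDPSG version). Let δ ∈ [0,1] and b ∈ (0,1), and set M := 1 − (√δ·b/(1+δ)) / (1 − b/(4(1+δ)²)). Then M ∈ (0,1], and (1−b)/M ≤ 1 − (1 − √δ/(1+δ))·b ≤ 1 − b/2 < 1. -/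
/-!
With `t = √δ/(1+δ) ≤ 1/2` (AM-GM: `2√δ ≤ 1 + δ`) and `D = 1 - b/(4(1+δ)²)`, the parameter is
`M = 1 - t b / D`. The only estimate needed is `D ≥ 1 - b + t b`, since then
`M ≥ (1 - b)/(1 - b + t b)`, which is exactly `(1 - b)/M ≤ 1 - (1 - t) b`.
-/

namespace ContractionFactor

lemma one_sub_div_mem_Ioc {c D : ℝ} (hc : 0 ≤ c) (hcD : c < D) : 1 - c / D ∈ Set.Ioc 0 1 := by
  have hD : 0 < D := hc.trans_lt hcD
  constructor
  · linarith [(div_lt_one hD).mpr hcD]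
  · linarith [div_nonneg hc hD.le]

lemma div_one_sub_div_le_add {a c D : ℝ} (ha : 0 < a) (hc : 0 ≤ c) (hD : a + c ≤ D) :
    a / (1 - c / D) ≤ a + c := by
  have hD0 : 0 < D := by linarith
  have hM : 0 < 1 - c / D := (one_sub_div_mem_Ioc hc (by linarith)).1
  rw [div_le_iff₀ hM]
  have key : (a + c) * (1 - c / D) - a = c * (D - (a + c)) / D := by
    field_simp
    ring
  have : 0 ≤ c * (D - (a + c)) / D := div_nonneg (mul_nonneg hc (by linarith)) hD0.le
  linarith

lemma sqrt_div_one_add_le_half {δ : ℝ} (hδ : 0 ≤ δ) : Real.sqrt δ / (1 + δ) ≤ 1 / 2 := by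
  have h2 : 2 * Real.sqrt δ * 1 ≤ Real.sqrt δ ^ 2 + 1 ^ 2 := two_mul_le_add_sq _ _
  rw [Real.sq_sqrt hδ] at h2
  rw [div_le_iff₀ (by linarith)]
  linarith

lemma div_four_mul_one_add_sq_le {δ b : ℝ} (hδ : 0 ≤ δ) (hb : 0 ≤ b) :
    b / (4 * (1 + δ) ^ 2) ≤ b / 4 :=
  div_le_div_of_nonneg_left hb (by norm_num) (by nlinarith)

end ContractionFactor

open ContractionFactor in
/-- Contraction-factor inequality for the C-RDPSG compression parameters: for `δ ∈ [0,1]`,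
`b ∈ (0,1)` and `M = 1 - (√δ b/(1+δ))/(1 - b/(4(1+δ)²))`, one has `M ∈ (0,1]` and
`(1-b)/M ≤ 1 - (1 - √δ/(1+δ)) b ≤ 1 - b/2 < 1`. -/
theorem contraction_factor_crdpsg
    (δ b : ℝ) (hδ : δ ∈ Set.Icc (0 : ℝ) 1) (hb : b ∈ Set.Ioo (0 : ℝ) 1)
    (M : ℝ) (hM : M = 1 - (Real.sqrt δ * b / (1 + δ)) / (1 - b / (4 * (1 + δ) ^ 2))) :
    M ∈ Set.Ioc (0 : ℝ) 1 ∧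
      (1 - b) / M ≤ 1 - (1 - Real.sqrt δ / (1 + δ)) * b ∧
      1 - (1 - Real.sqrt δ / (1 + δ)) * b ≤ 1 - b / 2 ∧
      1 - b / 2 < 1 := by
  obtain ⟨hδ0, -⟩ := hδ
  obtain ⟨hb0, hb1⟩ := hb
  set t := Real.sqrt δ / (1 + δ)
  have ht0 : 0 ≤ t := by positivity
  have ht : t ≤ 1 / 2 := sqrt_div_one_add_le_half hδ0
  have htb : 0 ≤ t * b := by positivity
  have hD : 1 - b + t * b ≤ 1 - b / (4 * (1 + δ) ^ 2) := by
    nlinarith [div_four_mul_one_add_sq_le hδ0 hb0.le]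
  rw [show Real.sqrt δ * b / (1 + δ) = t * b by ring] at hM
  subst hM
  refine ⟨one_sub_div_mem_Ioc htb (by linarith), ?_, by nlinarith, by linarith⟩
  calc (1 - b) / (1 - t * b / (1 - b / (4 * (1 + δ) ^ 2)))
      ≤ 1 - b + t * b := div_one_sub_div_le_add (by linarith) htb hD
    _ = 1 - (1 - t) * b := by ring
end

section
/- Compact one-step SVRG bound (Corollary for the finite-sum setting). Under the setting and assumptions of the one-step SVRG-oracle bound above, let L := max{L_xx,L_yy,L_xy,L_yx} > 0, μ := min{μ_x,μ_y} > 0, and s := μ·n·p_min/(24L²). Then E‖x_t − 𝟙x⋆ − sG^x + s∇_x F(𝟙x⋆,𝟙y⋆)‖² + E‖y_t − 𝟙y⋆ + sG^y − s∇_y F(𝟙x⋆,𝟙y⋆)‖² ≤ (1 − μ_x s + 4s²L_yx²/(np_min))·‖x_t − 𝟙x⋆‖² + (1 − μ_y s + 4s²L_xy²/(np_min))·‖y_t − 𝟙y⋆‖² + (4s²(L_xx² + L_yx²)/(np_min))·‖x̃_t − 𝟙x⋆‖² + (4s²(L_yy² + L_xy²)/(np_min))·‖ỹ_t − 𝟙y⋆‖².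 -/
open MeasureTheory RealInnerProductSpace

/-!
The saddle-point residual of the SVRG step splits, in expectation over the sampled index `j`,
into the squared distance, a cross term and the second moment of the estimator.  The estimator
is unbiased, so the cross term is `-2s⟪x - x⋆, ∇ₓ f(x, y) - ∇ₓ f(x⋆, y⋆)⟫` (with the opposite sign
for `y`), and the `x`- and `y`-cross terms together are at most `-2s(μ_x‖x - x⋆‖² + μ_y‖y - y⋆‖²)`
by strong convexity-concavity.  Importance sampling costs a factor `1/(n p_min)` in the second
moment, which the Lipschitz bounds turn into squared distances; with `s = μ n p_min / (24 L²)`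
the `L_xx` and `L_yy` parts of it are absorbed by half of the strong-convexity gain.
-/

section WeightedSums

lemma norm_sub_sq_le_two_mul {E : Type*} [SeminormedAddCommGroup E] (a b : E) :
    ‖a - b‖ ^ 2 ≤ 2 * (‖a‖ ^ 2 + ‖b‖ ^ 2) :=
  (pow_le_pow_left₀ (norm_nonneg _) (norm_sub_le a b) 2).trans add_sq_le

variable {F ι : Type*} [NormedAddCommGroup F] [InnerProductSpace ℝ F] [Fintype ι] {p : ι → ℝ}

lemma sum_mul_norm_sub_smul_sq (hp1 : ∑ j, p j = 1) (a : F) (s : ℝ) (z : ι → F) :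
    ∑ j, p j * ‖a - s • z j‖ ^ 2
      = ‖a‖ ^ 2 - 2 * s * ⟪a, ∑ j, p j • z j⟫ + s ^ 2 * ∑ j, p j * ‖z j‖ ^ 2 := by
  have hterm : ∀ j, p j * ‖a - s • z j‖ ^ 2
      = p j * ‖a‖ ^ 2 - 2 * s * ⟪a, p j • z j⟫ + s ^ 2 * (p j * ‖z j‖ ^ 2) := by
    intro j
    rw [norm_sub_sq_real, inner_smul_right, inner_smul_right, norm_smul, mul_pow,
      Real.norm_eq_abs, sq_abs]
    ring
  rw [Finset.sum_congr rfl fun j _ => hterm j, Finset.sum_add_distrib, Finset.sum_sub_distrib,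
    ← Finset.sum_mul, hp1, ← Finset.mul_sum, ← Finset.mul_sum, ← inner_sum, one_mul]

lemma sum_mul_norm_sub_sum_smul_sq_le (hp1 : ∑ j, p j = 1) (z : ι → F) :
    ∑ j, p j * ‖z j - ∑ k, p k • z k‖ ^ 2 ≤ ∑ j, p j * ‖z j‖ ^ 2 := by
  have h := sum_mul_norm_sub_smul_sq hp1 (∑ k, p k • z k) 1 z
  simp only [one_smul, norm_sub_rev (∑ k, p k • z k), one_pow, one_mul, mul_one,
    real_inner_self_eq_norm_sq] at h
  nlinarith [sq_nonneg ‖∑ k, p k • z k‖]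

end WeightedSums

section SVRGEstimator

variable {F : Type*} [NormedAddCommGroup F] [InnerProductSpace ℝ F] {n : ℕ} {p : Fin n → ℝ}

/-- The paper's `G^x` sampled at index `j`: `vt` and `vr` are the component gradients at the
current and at the reference point, `gr` is the full gradient at the reference point. -/
noncomputable def svrgEstimator (p : Fin n → ℝ) (vt vr : Fin n → F) (gr : F) (j : Fin n) : F :=
  (1 / ((n : ℝ) * p j)) • (vt j - vr j) + gr

lemma sum_smul_svrgEstimator (hp : ∀ j, p j ≠ 0) (hp1 : ∑ j, p j = 1) (vt vr : Fin n → F)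
    (gr : F) :
    ∑ j, p j • svrgEstimator p vt vr gr j
      = (1 / (n : ℝ)) • ∑ j, vt j - (1 / (n : ℝ)) • ∑ j, vr j + gr := by
  have hterm : ∀ j,
      p j • svrgEstimator p vt vr gr j = (1 / (n : ℝ)) • (vt j - vr j) + p j • gr := by
    intro j
    rw [svrgEstimator, smul_add, smul_smul]
    congr 2
    field_simp [hp j]
  simp only [hterm, Finset.sum_add_distrib, ← Finset.smul_sum, ← Finset.sum_smul, hp1, one_smul,
    Finset.sum_sub_distrib, smul_sub]

variable {pmin : ℝ}

lemma sum_mul_norm_inv_mul_smul_sq_le (hp : ∀ j, 0 < p j) (hpmin0 : 0 < pmin)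
    (hpmin : ∀ j, pmin ≤ p j) {w : Fin n → F} {Ut : ℝ} (hUt : ∀ j, ‖w j‖ ^ 2 ≤ Ut) :
    ∑ j, p j * ‖(1 / ((n : ℝ) * p j)) • w j‖ ^ 2 ≤ Ut / (n * pmin) := by
  have hterm : ∀ j, p j * ‖(1 / ((n : ℝ) * p j)) • w j‖ ^ 2 ≤ Ut / pmin / n ^ 2 := by
    intro j
    have hpj := hp j
    calc p j * ‖(1 / ((n : ℝ) * p j)) • w j‖ ^ 2 = ‖w j‖ ^ 2 / p j / n ^ 2 := by
          rw [norm_smul, mul_pow, Real.norm_eq_abs, sq_abs]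
          field_simp
      _ ≤ ‖w j‖ ^ 2 / pmin / n ^ 2 := by gcongr; exact hpmin j
      _ ≤ Ut / pmin / n ^ 2 := by gcongr; exact hUt j
  calc _ ≤ ∑ _j : Fin n, Ut / pmin / n ^ 2 := Finset.sum_le_sum fun j _ => hterm j
    _ = Ut / (n * pmin) := by
        rw [Finset.sum_const, Finset.card_univ, Fintype.card_fin, nsmul_eq_mul]
        rcases eq_or_ne (n : ℝ) 0 with hn | hn
        · simp [hn]
        · field_simp

lemma sum_mul_norm_svrgEstimator_sub_sq_le (hp : ∀ j, 0 < p j) (hp1 : ∑ j, p j = 1)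
    (hpmin0 : 0 < pmin) (hpmin : ∀ j, pmin ≤ p j) {vt vr vs : Fin n → F} {Ut Ur : ℝ}
    (hUt : ∀ j, ‖vt j - vs j‖ ^ 2 ≤ Ut) (hUr : ∀ j, ‖vr j - vs j‖ ^ 2 ≤ Ur) :
    ∑ j, p j * ‖svrgEstimator p vt vr ((1 / (n : ℝ)) • ∑ k, vr k) j
        - (1 / (n : ℝ)) • ∑ k, vs k‖ ^ 2 ≤ 2 / (n * pmin) * (Ut + Ur) := by
  set Y := svrgEstimator p vt vs 0
  set X := svrgEstimator p vr vs 0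
  have hXmean : ∑ k, p k • X k = (1 / (n : ℝ)) • ∑ k, vr k - (1 / (n : ℝ)) • ∑ k, vs k := by
    simpa using sum_smul_svrgEstimator (fun j => (hp j).ne') hp1 vr vs 0
  have hsplit : ∀ j, svrgEstimator p vt vr ((1 / (n : ℝ)) • ∑ k, vr k) j
      - (1 / (n : ℝ)) • ∑ k, vs k = Y j - (X j - ∑ k, p k • X k) := by
    intro j
    rw [hXmean]
    simp only [Y, X, svrgEstimator]
    module
  have hY : ∑ j, p j * ‖Y j‖ ^ 2 ≤ Ut / (n * pmin) := by
    simpa [Y, svrgEstimator] using sum_mul_norm_inv_mul_smul_sq_le hp hpmin0 hpmin hUt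
  have hX : ∑ j, p j * ‖X j‖ ^ 2 ≤ Ur / (n * pmin) := by
    simpa [X, svrgEstimator] using sum_mul_norm_inv_mul_smul_sq_le hp hpmin0 hpmin hUr
  calc _ ≤ ∑ j, p j * (2 * (‖Y j‖ ^ 2 + ‖X j - ∑ k, p k • X k‖ ^ 2)) := by
        refine Finset.sum_le_sum fun j _ => ?_
        rw [hsplit j]
        exact mul_le_mul_of_nonneg_left (norm_sub_sq_le_two_mul _ _) (hp j).le
    _ = 2 * (∑ j, p j * ‖Y j‖ ^ 2 + ∑ j, p j * ‖X j - ∑ k, p k • X k‖ ^ 2) := by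
        rw [← Finset.sum_add_distrib, Finset.mul_sum]
        exact Finset.sum_congr rfl fun j _ => by ring
    _ ≤ 2 * (Ut / (n * pmin) + Ur / (n * pmin)) := by
        gcongr
        exact (sum_mul_norm_sub_sum_smul_sq_le hp1 X).trans hX
    _ = 2 / (n * pmin) * (Ut + Ur) := by ring

lemma sum_mul_norm_sub_smul_svrgEstimator_sq_le (hp : ∀ j, 0 < p j) (hp1 : ∑ j, p j = 1)
    (hpmin0 : 0 < pmin) (hpmin : ∀ j, pmin ≤ p j) {vt vr vs : Fin n → F} {gt gr gs : F}
    (hgt : gt = (1 / (n : ℝ)) • ∑ k, vt k) (hgr : gr = (1 / (n : ℝ)) • ∑ k, vr k)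
    (hgs : gs = (1 / (n : ℝ)) • ∑ k, vs k) {Ut Ur : ℝ}
    (hUt : ∀ j, ‖vt j - vs j‖ ^ 2 ≤ Ut) (hUr : ∀ j, ‖vr j - vs j‖ ^ 2 ≤ Ur) (a : F) (s : ℝ) :
    ∑ j, p j * ‖a - s • svrgEstimator p vt vr gr j + s • gs‖ ^ 2
      ≤ ‖a‖ ^ 2 - 2 * s * ⟪a, gt - gs⟫ + s ^ 2 * (2 / (n * pmin) * (Ut + Ur)) := by
  have hmean : ∑ j, p j • (svrgEstimator p vt vr gr j - gs) = gt - gs := by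
    simp only [smul_sub, Finset.sum_sub_distrib, ← Finset.sum_smul, hp1, one_smul,
      sum_smul_svrgEstimator (fun j => (hp j).ne') hp1, hgt, hgr]
    abel
  calc _ = ∑ j, p j * ‖a - s • (svrgEstimator p vt vr gr j - gs)‖ ^ 2 := by
        simp only [smul_sub, sub_sub_eq_add_sub, sub_add_eq_add_sub]
    _ ≤ _ := by
        rw [sum_mul_norm_sub_smul_sq hp1, hmean]
        gcongr
        subst hgr hgs
        exact sum_mul_norm_svrgEstimator_sub_sq_le hp hp1 hpmin0 hpmin hUt hUr

end SVRGEstimator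

lemma norm_sub_sq_le_of_lipschitz₂ {X Y E : Type*} [SeminormedAddCommGroup X]
    [SeminormedAddCommGroup Y] [SeminormedAddCommGroup E] {φ : X → Y → E} {A B : ℝ}
    (hA : ∀ y x₁ x₂, ‖φ x₁ y - φ x₂ y‖ ≤ A * ‖x₁ - x₂‖)
    (hB : ∀ x y₁ y₂, ‖φ x y₁ - φ x y₂‖ ≤ B * ‖y₁ - y₂‖) (x₁ x₂ : X) (y₁ y₂ : Y) :
    ‖φ x₁ y₁ - φ x₂ y₂‖ ^ 2 ≤ 2 * ((A * ‖x₁ - x₂‖) ^ 2 + (B * ‖y₁ - y₂‖) ^ 2) := by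
  have h := (norm_sub_le_norm_sub_add_norm_sub (φ x₁ y₁) (φ x₂ y₁) (φ x₂ y₂)).trans
    (add_le_add (hA y₁ x₁ x₂) (hB x₂ y₁ y₂))
  exact (pow_le_pow_left₀ (norm_nonneg _) h 2).trans add_sq_le

section SaddlePoint

variable {X Y : Type*} [NormedAddCommGroup X] [InnerProductSpace ℝ X]
  [NormedAddCommGroup Y] [InnerProductSpace ℝ Y]

lemma strongMonotone_of_strongConvexConcave {φ : X → Y → ℝ} {Gx : X → Y → X} {Gy : X → Y → Y}
    {μx μy : ℝ}
    (hsc : ∀ y x₁ x₂, φ x₂ y + ⟪Gx x₂ y, x₁ - x₂⟫ + μx / 2 * ‖x₁ - x₂‖ ^ 2 ≤ φ x₁ y)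
    (hscc : ∀ x y₁ y₂, φ x y₁ ≤ φ x y₂ + ⟪Gy x y₂, y₁ - y₂⟫ - μy / 2 * ‖y₁ - y₂‖ ^ 2)
    (x xs : X) (y ys : Y) :
    μx * ‖x - xs‖ ^ 2 + μy * ‖y - ys‖ ^ 2
      ≤ ⟪x - xs, Gx x y - Gx xs ys⟫ - ⟪y - ys, Gy x y - Gy xs ys⟫ := by
  have h₁ := hsc y xs x
  have h₂ := hsc ys x xs
  have h₃ := hscc x ys y
  have h₄ := hscc xs y ys
  rw [← neg_sub x xs, inner_neg_right, norm_neg] at h₁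
  rw [← neg_sub y ys, inner_neg_right, norm_neg] at h₃
  rw [real_inner_comm] at h₁ h₂ h₃ h₄
  rw [inner_sub_right, inner_sub_right]
  linarith

lemma four_mul_sq_div_mul_mul_sq_le {s q a t L μ : ℝ} (hs : 0 ≤ s) (hq : 0 < q)
    (hat : 0 ≤ a * t) (ht : 0 ≤ t) (haL : a ≤ L) (hsL : 4 * s * L ^ 2 ≤ μ * q) :
    4 * s ^ 2 / q * (a * t) ^ 2 ≤ s * μ * t ^ 2 := by
  calc 4 * s ^ 2 / q * (a * t) ^ 2 ≤ 4 * s ^ 2 / q * (L * t) ^ 2 := by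
        gcongr
    _ = s * t ^ 2 * (4 * s * L ^ 2) / q := by ring
    _ ≤ s * t ^ 2 * (μ * q) / q := by gcongr
    _ = s * μ * t ^ 2 := by field_simp

variable {n : ℕ} {p : Fin n → ℝ} {pmin : ℝ}

theorem svrg_one_step_bound {φ : X → Y → ℝ} {gx : Fin n → X → Y → X} {gy : Fin n → X → Y → Y}
    {Gx : X → Y → X} {Gy : X → Y → Y}
    (hGx : ∀ x y, Gx x y = (1 / (n : ℝ)) • ∑ j, gx j x y)
    (hGy : ∀ x y, Gy x y = (1 / (n : ℝ)) • ∑ j, gy j x y) {Lxx Lyy Lxy Lyx : ℝ}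
    (hxx : ∀ j y x₁ x₂, ‖gx j x₁ y - gx j x₂ y‖ ≤ Lxx * ‖x₁ - x₂‖)
    (hyy : ∀ j x y₁ y₂, ‖gy j x y₁ - gy j x y₂‖ ≤ Lyy * ‖y₁ - y₂‖)
    (hxy : ∀ j x y₁ y₂, ‖gx j x y₁ - gx j x y₂‖ ≤ Lxy * ‖y₁ - y₂‖)
    (hyx : ∀ j y x₁ x₂, ‖gy j x₁ y - gy j x₂ y‖ ≤ Lyx * ‖x₁ - x₂‖) {μx μy : ℝ}
    (hsc : ∀ y x₁ x₂, φ x₂ y + ⟪Gx x₂ y, x₁ - x₂⟫ + μx / 2 * ‖x₁ - x₂‖ ^ 2 ≤ φ x₁ y)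
    (hscc : ∀ x y₁ y₂, φ x y₁ ≤ φ x y₂ + ⟪Gy x y₂, y₁ - y₂⟫ - μy / 2 * ‖y₁ - y₂‖ ^ 2)
    (hp : ∀ j, 0 < p j) (hp1 : ∑ j, p j = 1) (hpmin0 : 0 < pmin) (hpmin : ∀ j, pmin ≤ p j)
    {s L : ℝ} (hs : 0 ≤ s) (hLxx : Lxx ≤ L) (hLyy : Lyy ≤ L)
    (hsx : 4 * s * L ^ 2 ≤ μx * (n * pmin)) (hsy : 4 * s * L ^ 2 ≤ μy * (n * pmin))
    (x xr xs : X) (y yr ys : Y) :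
    ∑ j, p j * ‖x - xs - s • svrgEstimator p (fun j => gx j x y) (fun j => gx j xr yr)
        (Gx xr yr) j + s • Gx xs ys‖ ^ 2
      + ∑ j, p j * ‖y - ys + s • svrgEstimator p (fun j => gy j x y) (fun j => gy j xr yr)
        (Gy xr yr) j - s • Gy xs ys‖ ^ 2 ≤
      (1 - μx * s + 4 * s ^ 2 * Lyx ^ 2 / (n * pmin)) * ‖x - xs‖ ^ 2
        + (1 - μy * s + 4 * s ^ 2 * Lxy ^ 2 / (n * pmin)) * ‖y - ys‖ ^ 2
        + (4 * s ^ 2 * (Lxx ^ 2 + Lyx ^ 2) / (n * pmin)) * ‖xr - xs‖ ^ 2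
        + (4 * s ^ 2 * (Lyy ^ 2 + Lxy ^ 2) / (n * pmin)) * ‖yr - ys‖ ^ 2 := by
  obtain ⟨j₀⟩ : Nonempty (Fin n) := by
    rcases n with _ | n
    · simp at hp1
    · exact ⟨0⟩
  have hq : 0 < (n : ℝ) * pmin := mul_pos (Nat.cast_pos.2 j₀.pos) hpmin0
  have hx := sum_mul_norm_sub_smul_svrgEstimator_sq_le hp hp1 hpmin0 hpmin (hGx x y)
    (hGx xr yr) (hGx xs ys) (fun j => norm_sub_sq_le_of_lipschitz₂ (hxx j) (hxy j) x xs y ys)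
    (fun j => norm_sub_sq_le_of_lipschitz₂ (hxx j) (hxy j) xr xs yr ys) (x - xs) s
  have hy := sum_mul_norm_sub_smul_svrgEstimator_sq_le hp hp1 hpmin0 hpmin (hGy x y)
    (hGy xr yr) (hGy xs ys) (fun j => norm_sub_sq_le_of_lipschitz₂ (hyx j) (hyy j) x xs y ys)
    (fun j => norm_sub_sq_le_of_lipschitz₂ (hyx j) (hyy j) xr xs yr ys) (y - ys) (-s)
  -- the ascent step in `y` is a descent step with step size `-s`
  simp only [neg_smul, sub_neg_eq_add, ← sub_eq_add_neg] at hy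
  have hmono := strongMonotone_of_strongConvexConcave hsc hscc x xs y ys
  have hax := four_mul_sq_div_mul_mul_sq_le hs hq ((norm_nonneg _).trans (hxx j₀ y x xs))
    (norm_nonneg _) hLxx hsx
  have hay := four_mul_sq_div_mul_mul_sq_le hs hq ((norm_nonneg _).trans (hyy j₀ x y ys))
    (norm_nonneg _) hLyy hsy
  linear_combination hx + hy + 2 * s * hmono + hax + hay

end SaddlePoint

lemma gradient_const_mul_sum {E ι : Type*} [NormedAddCommGroup E] [InnerProductSpace ℝ E]
    [CompleteSpace E] {u : Finset ι} {f : ι → E → ℝ} {x : E}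
    (hf : ∀ j ∈ u, DifferentiableAt ℝ (f j) x) (c : ℝ) :
    gradient (fun x => c * ∑ j ∈ u, f j x) x = c • ∑ j ∈ u, gradient (f j) x := by
  simp only [gradient, fderiv_const_mul (DifferentiableAt.fun_sum hf), fderiv_fun_sum hf,
    map_smul, map_sum]

section Sampling

variable {Ω ι : Type*} [MeasurableSpace Ω] {μ : Measure Ω} [IsFiniteMeasure μ] [Fintype ι]
  [MeasurableSpace ι] [MeasurableSingletonClass ι]

lemma integral_comp_eq_sum_of_law {l : Ω → ι} (hl : Measurable l) {p : ι → ℝ}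
    (hp : ∀ j, 0 ≤ p j) (hlaw : ∀ j, μ {ω | l ω = j} = ENNReal.ofReal (p j)) (h : ι → ℝ) :
    ∫ ω, h (l ω) ∂μ = ∑ j, p j * h j := by
  rw [← integral_map hl.aemeasurable (measurable_of_finite h).aestronglyMeasurable,
    integral_fintype Integrable.of_finite]
  refine Finset.sum_congr rfl fun j _ => ?_
  rw [smul_eq_mul, measureReal_def, Measure.map_apply hl (measurableSet_singleton j)]
  simp [Set.preimage, hlaw, hp]

lemma integral_sum_comp_add_integral_sum_comp_le {m : ℕ} {l : Fin m → Ω → ι}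
    (hl : ∀ i, Measurable (l i)) {p : Fin m → ι → ℝ} (hp : ∀ i j, 0 ≤ p i j)
    (hlaw : ∀ i j, μ {ω | l i ω = j} = ENNReal.ofReal (p i j)) {H K : Fin m → ι → ℝ}
    {R : Fin m → ℝ} (hR : ∀ i, ∑ j, p i j * H i j + ∑ j, p i j * K i j ≤ R i) :
    ∫ ω, ∑ i, H i (l i ω) ∂μ + ∫ ω, ∑ i, K i (l i ω) ∂μ ≤ ∑ i, R i := by
  have hint : ∀ G : Fin m → ι → ℝ, ∫ ω, ∑ i, G i (l i ω) ∂μ = ∑ i, ∑ j, p i j * G i j :=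
    fun G => by
      rw [integral_finsetSum (f := fun i ω => G i (l i ω)) _
        fun i _ => Integrable.of_finite.comp_measurable (hl i)]
      exact Finset.sum_congr rfl fun i _ => integral_comp_eq_sum_of_law (hl i) (hp i) (hlaw i) _
  rw [hint, hint, ← Finset.sum_add_distrib]
  exact Finset.sum_le_sum fun i _ => hR i

end Sampling

theorem compact_one_step_svrg_bound_general {dx dy m n : ℕ}
    {Ω : Type*} [MeasurableSpace Ω] (μP : Measure Ω) [IsProbabilityMeasure μP]
    (fij : Fin m → Fin n → EuclideanSpace ℝ (Fin dx) → EuclideanSpace ℝ (Fin dy) → ℝ)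
    (hdx : ∀ i j y, Differentiable ℝ (fun x => fij i j x y))
    (hdy : ∀ i j x, Differentiable ℝ (fun y => fij i j x y))
    (Lxx Lyy Lxy Lyx : ℝ)
    (hLxx : ∀ i j y x₁ x₂, ‖gradient (fun x => fij i j x y) x₁
        - gradient (fun x => fij i j x y) x₂‖ ≤ Lxx * ‖x₁ - x₂‖)
    (hLyy : ∀ i j x y₁ y₂, ‖gradient (fun y => fij i j x y) y₁
        - gradient (fun y => fij i j x y) y₂‖ ≤ Lyy * ‖y₁ - y₂‖)
    (hLxy : ∀ i j x y₁ y₂, ‖gradient (fun x' => fij i j x' y₁) x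
        - gradient (fun x' => fij i j x' y₂) x‖ ≤ Lxy * ‖y₁ - y₂‖)
    (hLyx : ∀ i j y x₁ x₂, ‖gradient (fun y' => fij i j x₁ y') y
        - gradient (fun y' => fij i j x₂ y') y‖ ≤ Lyx * ‖x₁ - x₂‖)
    (fi : Fin m → EuclideanSpace ℝ (Fin dx) → EuclideanSpace ℝ (Fin dy) → ℝ)
    (hfi : ∀ i x y, fi i x y = (1 / (n : ℝ)) * ∑ j, fij i j x y)
    (μx μy : ℝ)
    (hsc : ∀ i y x₁ x₂, fi i x₂ y + ⟪gradient (fun x => fi i x y) x₂, x₁ - x₂⟫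
        + μx / 2 * ‖x₁ - x₂‖ ^ 2 ≤ fi i x₁ y)
    (hscc : ∀ i x y₁ y₂, fi i x y₁ ≤ fi i x y₂ + ⟪gradient (fun y => fi i x y) y₂, y₁ - y₂⟫
        - μy / 2 * ‖y₁ - y₂‖ ^ 2)
    (p : Fin m → Fin n → ℝ) (hp : ∀ i j, 0 < p i j) (hp1 : ∀ i, ∑ j, p i j = 1)
    (pmin : ℝ) (hpmin : IsLeast {t : ℝ | ∃ i j, p i j = t} pmin)
    (xs : EuclideanSpace ℝ (Fin dx)) (ys : EuclideanSpace ℝ (Fin dy))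
    (xt xr : Fin m → EuclideanSpace ℝ (Fin dx)) (yt yr : Fin m → EuclideanSpace ℝ (Fin dy))
    (l : Fin m → Ω → Fin n) (hlmeas : ∀ i, Measurable (l i))
    (hllaw : ∀ i j, μP {ω | l i ω = j} = ENNReal.ofReal (p i j))
    -- the constants `L`, `μ` and the step size
    (L μ' : ℝ) (hL : L = max (max Lxx Lyy) (max Lxy Lyx)) (hL0 : 0 < L)
    (hμ' : μ' = min μx μy) (hμ0 : 0 < μ')
    (s : ℝ) (hs : s = μ' * n * pmin / (24 * L ^ 2)) :
    (∫ ω, ∑ i, ‖xt i - xs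
          - s • ((1 / ((n : ℝ) * p i (l i ω))) •
                (gradient (fun x => fij i (l i ω) x (yt i)) (xt i)
                  - gradient (fun x => fij i (l i ω) x (yr i)) (xr i))
              + gradient (fun x => fi i x (yr i)) (xr i))
          + s • gradient (fun x => fi i x ys) xs‖ ^ 2 ∂μP)
      + (∫ ω, ∑ i, ‖yt i - ys
          + s • ((1 / ((n : ℝ) * p i (l i ω))) •
                (gradient (fun y => fij i (l i ω) (xt i) y) (yt i)
                  - gradient (fun y => fij i (l i ω) (xr i) y) (yr i))
              + gradient (fun y => fi i (xr i) y) (yr i))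
          - s • gradient (fun y => fi i xs y) ys‖ ^ 2 ∂μP) ≤
      (1 - μx * s + 4 * s ^ 2 * Lyx ^ 2 / (n * pmin)) * ∑ i, ‖xt i - xs‖ ^ 2
        + (1 - μy * s + 4 * s ^ 2 * Lxy ^ 2 / (n * pmin)) * ∑ i, ‖yt i - ys‖ ^ 2
        + (4 * s ^ 2 * (Lxx ^ 2 + Lyx ^ 2) / (n * pmin)) * ∑ i, ‖xr i - xs‖ ^ 2
        + (4 * s ^ 2 * (Lyy ^ 2 + Lxy ^ 2) / (n * pmin)) * ∑ i, ‖yr i - ys‖ ^ 2 := by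
  obtain ⟨⟨i₀, j₀, hpmin_eq⟩, hpmin_le⟩ := hpmin
  have hpmin0 : 0 < pmin := hpmin_eq ▸ hp i₀ j₀
  have hs0 : 0 ≤ s := hs ▸ by positivity
  have hstep : ∀ μc, μ' ≤ μc → 4 * s * L ^ 2 ≤ μc * (n * pmin) := by
    intro μc hμc
    calc 4 * s * L ^ 2 = μ' * (n * pmin) / 6 := by rw [hs]; field_simp; ring
      _ ≤ μ' * (n * pmin) := div_le_self (by positivity) (by norm_num)
      _ ≤ μc * (n * pmin) := by gcongr
  have hGx : ∀ i x y, gradient (fun x => fi i x y) x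
      = (1 / (n : ℝ)) • ∑ j, gradient (fun x => fij i j x y) x := fun i x y => by
    simp_rw [hfi]
    exact gradient_const_mul_sum (fun j _ => (hdx i j y).differentiableAt) _
  have hGy : ∀ i x y, gradient (fun y => fi i x y) y
      = (1 / (n : ℝ)) • ∑ j, gradient (fun y => fij i j x y) y := fun i x y => by
    simp_rw [hfi]
    exact gradient_const_mul_sum (fun j _ => (hdy i j x).differentiableAt) _
  refine (integral_sum_comp_add_integral_sum_comp_le hlmeas (fun i j => (hp i j).le) hllaw
    fun i => svrg_one_step_bound (hGx i) (hGy i) (hLxx i) (hLyy i) (hLxy i) (hLyx i) (hsc i)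
      (hscc i) (hp i) (hp1 i) hpmin0 (fun j => hpmin_le ⟨i, j, rfl⟩) hs0
      (hL ▸ le_max_of_le_left (le_max_left _ _)) (hL ▸ le_max_of_le_left (le_max_right _ _))
      (hstep μx (hμ' ▸ min_le_left _ _)) (hstep μy (hμ' ▸ min_le_right _ _))
      (xt i) (xr i) xs (yt i) (yr i) ys).trans_eq ?_
  simp only [Finset.sum_add_distrib, Finset.mul_sum]

/-- Compact one-step SVRG bound (Corollary `exp_xkt_ykt_svrg`, finite-sum setting): under
the setting of the one-step SVRG-oracle bound, with `L = max{L_xx,L_yy,L_xy,L_yx} > 0`,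
`μ = min{μ_x,μ_y} > 0` and the step size `s = μ n p_min/(24 L²)`, the Bregman-distance
terms can be dropped. -/
theorem compact_one_step_svrg_bound {dx dy m n : ℕ} (hm : 0 < m) (hn : 0 < n)
    {Ω : Type*} [MeasurableSpace Ω] (μP : Measure Ω) [IsProbabilityMeasure μP]
    (fij : Fin m → Fin n → EuclideanSpace ℝ (Fin dx) → EuclideanSpace ℝ (Fin dy) → ℝ)
    (hdx : ∀ i j y, Differentiable ℝ (fun x => fij i j x y))
    (hdy : ∀ i j x, Differentiable ℝ (fun y => fij i j x y))
    (hconvx : ∀ i j y, ConvexOn ℝ Set.univ (fun x => fij i j x y))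
    (hconcy : ∀ i j x, ConcaveOn ℝ Set.univ (fun y => fij i j x y))
    (Lxx Lyy Lxy Lyx : ℝ)
    (hLxx : ∀ i j y x₁ x₂, ‖gradient (fun x => fij i j x y) x₁
        - gradient (fun x => fij i j x y) x₂‖ ≤ Lxx * ‖x₁ - x₂‖)
    (hLyy : ∀ i j x y₁ y₂, ‖gradient (fun y => fij i j x y) y₁
        - gradient (fun y => fij i j x y) y₂‖ ≤ Lyy * ‖y₁ - y₂‖)
    (hLxy : ∀ i j x y₁ y₂, ‖gradient (fun x' => fij i j x' y₁) x
        - gradient (fun x' => fij i j x' y₂) x‖ ≤ Lxy * ‖y₁ - y₂‖)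
    (hLyx : ∀ i j y x₁ x₂, ‖gradient (fun y' => fij i j x₁ y') y
        - gradient (fun y' => fij i j x₂ y') y‖ ≤ Lyx * ‖x₁ - x₂‖)
    (fi : Fin m → EuclideanSpace ℝ (Fin dx) → EuclideanSpace ℝ (Fin dy) → ℝ)
    (hfi : ∀ i x y, fi i x y = (1 / (n : ℝ)) * ∑ j, fij i j x y)
    (μx μy : ℝ)
    (hsc : ∀ i y x₁ x₂, fi i x₂ y + ⟪gradient (fun x => fi i x y) x₂, x₁ - x₂⟫
        + μx / 2 * ‖x₁ - x₂‖ ^ 2 ≤ fi i x₁ y)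
    (hscc : ∀ i x y₁ y₂, fi i x y₁ ≤ fi i x y₂ + ⟪gradient (fun y => fi i x y) y₂, y₁ - y₂⟫
        - μy / 2 * ‖y₁ - y₂‖ ^ 2)
    (p : Fin m → Fin n → ℝ) (hp : ∀ i j, 0 < p i j) (hp1 : ∀ i, ∑ j, p i j = 1)
    (pmin : ℝ) (hpmin : IsLeast {t : ℝ | ∃ i j, p i j = t} pmin)
    (xs : EuclideanSpace ℝ (Fin dx)) (ys : EuclideanSpace ℝ (Fin dy))
    (xt xr : Fin m → EuclideanSpace ℝ (Fin dx)) (yt yr : Fin m → EuclideanSpace ℝ (Fin dy))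
    (l : Fin m → Ω → Fin n) (hlmeas : ∀ i, Measurable (l i))
    (hlindep : ProbabilityTheory.iIndepFun l μP)
    (hllaw : ∀ i j, μP {ω | l i ω = j} = ENNReal.ofReal (p i j))
    -- the constants `L`, `μ` and the step size
    (L μ' : ℝ) (hL : L = max (max Lxx Lyy) (max Lxy Lyx)) (hL0 : 0 < L)
    (hμ' : μ' = min μx μy) (hμ0 : 0 < μ')
    (s : ℝ) (hs : s = μ' * n * pmin / (24 * L ^ 2)) :
    (∫ ω, ∑ i, ‖xt i - xs
          - s • ((1 / ((n : ℝ) * p i (l i ω))) •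
                (gradient (fun x => fij i (l i ω) x (yt i)) (xt i)
                  - gradient (fun x => fij i (l i ω) x (yr i)) (xr i))
              + gradient (fun x => fi i x (yr i)) (xr i))
          + s • gradient (fun x => fi i x ys) xs‖ ^ 2 ∂μP)
      + (∫ ω, ∑ i, ‖yt i - ys
          + s • ((1 / ((n : ℝ) * p i (l i ω))) •
                (gradient (fun y => fij i (l i ω) (xt i) y) (yt i)
                  - gradient (fun y => fij i (l i ω) (xr i) y) (yr i))
              + gradient (fun y => fi i (xr i) y) (yr i))
          - s • gradient (fun y => fi i xs y) ys‖ ^ 2 ∂μP) ≤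
      (1 - μx * s + 4 * s ^ 2 * Lyx ^ 2 / (n * pmin)) * ∑ i, ‖xt i - xs‖ ^ 2
        + (1 - μy * s + 4 * s ^ 2 * Lxy ^ 2 / (n * pmin)) * ∑ i, ‖yt i - ys‖ ^ 2
        + (4 * s ^ 2 * (Lxx ^ 2 + Lyx ^ 2) / (n * pmin)) * ∑ i, ‖xr i - xs‖ ^ 2
        + (4 * s ^ 2 * (Lyy ^ 2 + Lxy ^ 2) / (n * pmin)) * ∑ i, ‖yr i - ys‖ ^ 2 :=
  compact_one_step_svrg_bound_general μP fij hdx hdy Lxx Lyy Lxy Lyx hLxx hLyy hLxy hLyx fi hfi μx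
    μy hsc hscc p hp hp1 pmin hpmin xs ys xt xr yt yr l hlmeas hllaw L μ' hL hL0 hμ' hμ0 s hs
end

section
/- Feasibility bounds for the C-DPSVRG parameter b_x. Let n ≥ 1 be an integer and p_min ∈ (0, 1/n]; let μ, μ_x, L_xx, L_yx, L be positive reals with μ ≤ μ_x ≤ L_xx ≤ L and L_yx ≤ L; set κ_f := L/μ, κ_x := L_xx/μ_x, s := μ·n·p_min/(24L²), and b_x := s·μ_x − 4s²L_yx²/(np_min) − 8s²(L_xx² + L_yx²)/(np_min). Then n·p_min/(144κ_f²) ≤ b_x < s·μ_x ≤ n·p_min/(24κ_x²) ≤ 1/24; in particular b_x ∈ (0,1). -/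
/-!
Write `P = n·p_min ∈ (0, 1]`. The choice `s = μP/(24L²)` makes `s²L²/P = sμ/24`, and the two
correction terms of `b_x` add up to `s²(8L_xx² + 12L_yx²)/P ≤ 20 s²L²/P = (5/6) sμ ≤ (5/6) sμ_x`,
which leaves `b_x ≥ sμ/6 = P/(144κ_f²)`. The upper bounds come from `μ/L² ≤ μ_x/L_xx²` and `κ_x ≥ 1`.
-/

open Set

lemma natCast_mul_mem_Ioc_of_mem_Ioc {n : ℕ} {p : ℝ} (hp : p ∈ Ioc 0 (1 / (n : ℝ))) :
    (n : ℝ) * p ∈ Ioc 0 1 := by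
  obtain ⟨hp0, hp1⟩ := hp
  have hn : (0 : ℝ) < n := one_div_pos.mp (hp0.trans_le hp1)
  refine ⟨mul_pos hn hp0, ?_⟩
  calc (n : ℝ) * p ≤ n * (1 / n) := by gcongr
    _ = 1 := mul_one_div_cancel hn.ne'

section StepSize

variable {s μ μx Lxx L P : ℝ}

lemma sq_mul_sq_div_eq_of_eq_step (hs : s = μ * P / (24 * L ^ 2)) (hL : L ≠ 0) (hP : P ≠ 0) :
    s ^ 2 * L ^ 2 / P = s * μ / 24 := by
  subst hs
  field_simp

lemma mul_div_six_le_of_eq_step {c : ℝ} (hs : s = μ * P / (24 * L ^ 2)) (hμ : 0 ≤ μ)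
    (hL : L ≠ 0) (hP : 0 < P) (hμx : μ ≤ μx) (hc : c ≤ 20 * L ^ 2) :
    s * μ / 6 ≤ s * μx - s ^ 2 * c / P := by
  have hs0 : 0 ≤ s := hs ▸ by positivity
  have hcorr : s ^ 2 * c / P ≤ 20 * (s * μ / 24) := by
    rw [← sq_mul_sq_div_eq_of_eq_step hs hL hP.ne']
    calc s ^ 2 * c / P ≤ s ^ 2 * (20 * L ^ 2) / P := by gcongr
      _ = 20 * (s ^ 2 * L ^ 2 / P) := by ring
  have hμμx : s * μ ≤ s * μx := mul_le_mul_of_nonneg_left hμx hs0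
  linarith

lemma mul_le_div_kappa_sq_of_eq_step (hs : s = μ * P / (24 * L ^ 2)) (hμ : 0 < μ)
    (hP : 0 ≤ P) (h1 : μ ≤ μx) (h2 : μx ≤ Lxx) (h3 : Lxx ≤ L) :
    s * μx ≤ P / (24 * (Lxx / μx) ^ 2) := by
  have hμx : 0 < μx := hμ.trans_le h1
  have hLxx : 0 < Lxx := hμx.trans_le h2
  have hratio : μ / L ^ 2 ≤ μx / Lxx ^ 2 :=
    div_le_div₀ hμx.le h1 (by positivity) (pow_le_pow_left₀ hLxx.le h3 2)
  calc s * μx = P * μx / 24 * (μ / L ^ 2) := by rw [hs]; ring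
    _ ≤ P * μx / 24 * (μx / Lxx ^ 2) := by gcongr
    _ = P / (24 * (Lxx / μx) ^ 2) := by field_simp

end StepSize

lemma div_mul_sq_le_one_div {P c κ : ℝ} (hP : P ≤ 1) (hc : 0 < c) (hκ : 1 ≤ κ) :
    P / (c * κ ^ 2) ≤ 1 / c := by
  have hcκ : c ≤ c * κ ^ 2 := le_mul_of_one_le_right hc.le (one_le_pow₀ hκ)
  calc P / (c * κ ^ 2) ≤ 1 / (c * κ ^ 2) := by gcongr
    _ ≤ 1 / c := one_div_le_one_div_of_le hc hcκ

theorem cdpsvrg_bx_feasibility_general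
    (n : ℕ) (pmin : ℝ) (hp : pmin ∈ Set.Ioc (0 : ℝ) (1 / (n : ℝ)))
    (μ μx Lxx Lyx L : ℝ)
    (hμ : 0 < μ) (hLyx : 0 < Lyx)
    (h1 : μ ≤ μx) (h2 : μx ≤ Lxx) (h3 : Lxx ≤ L) (h4 : Lyx ≤ L)
    (κf κx : ℝ) (hκf : κf = L / μ) (hκx : κx = Lxx / μx)
    (s bx : ℝ) (hs : s = μ * n * pmin / (24 * L ^ 2))
    (hbx : bx = s * μx - 4 * s ^ 2 * Lyx ^ 2 / (n * pmin)
        - 8 * s ^ 2 * (Lxx ^ 2 + Lyx ^ 2) / (n * pmin)) :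
    n * pmin / (144 * κf ^ 2) ≤ bx ∧
      bx < s * μx ∧
      s * μx ≤ n * pmin / (24 * κx ^ 2) ∧
      n * pmin / (24 * κx ^ 2) ≤ 1 / 24 ∧
      0 < bx ∧ bx < 1 := by
  obtain ⟨hP, hP1⟩ := natCast_mul_mem_Ioc_of_mem_Ioc hp
  set P := (n : ℝ) * pmin
  replace hs : s = μ * P / (24 * L ^ 2) := by rw [hs, mul_assoc]
  have hμx : 0 < μx := hμ.trans_le h1
  have hLxx : 0 < Lxx := hμx.trans_le h2
  have hL : 0 < L := hLxx.trans_le h3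
  have hs0 : 0 < s := hs ▸ by positivity
  have hbx' : bx = s * μx - s ^ 2 * (8 * Lxx ^ 2 + 12 * Lyx ^ 2) / P := by rw [hbx]; ring
  have hcorr : 8 * Lxx ^ 2 + 12 * Lyx ^ 2 ≤ 20 * L ^ 2 := by
    nlinarith [pow_le_pow_left₀ hLxx.le h3 2, pow_le_pow_left₀ hLyx.le h4 2]
  have hlower : s * μ / 6 ≤ bx :=
    hbx' ▸ mul_div_six_le_of_eq_step hs hμ.le hL.ne' hP h1 hcorr
  have hκf' : P / (144 * κf ^ 2) = s * μ / 6 := by rw [hκf, hs]; field_simp; ring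
  have hgap : bx < s * μx := by
    rw [hbx']
    have : 0 < s ^ 2 * (8 * Lxx ^ 2 + 12 * Lyx ^ 2) / P := by positivity
    linarith
  have hmid : s * μx ≤ P / (24 * κx ^ 2) := hκx ▸ mul_le_div_kappa_sq_of_eq_step hs hμ hP.le h1 h2 h3
  have htop : P / (24 * κx ^ 2) ≤ 1 / 24 :=
    div_mul_sq_le_one_div hP1 (by norm_num) (hκx ▸ (one_le_div hμx).mpr h2)
  have hbx_pos : 0 < bx := (by positivity : 0 < s * μ / 6).trans_le hlower
  exact ⟨hκf' ▸ hlower, hgap, hmid, htop, hbx_pos, by linarith⟩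

/-- Feasibility bounds for the C-DPSVRG parameter `b_x`: with `s = μ n p_min/(24 L²)` and
`b_x = s μ_x - 4 s² L_yx²/(n p_min) - 8 s² (L_xx² + L_yx²)/(n p_min)`, one has
`n p_min/(144 κ_f²) ≤ b_x < s μ_x ≤ n p_min/(24 κ_x²) ≤ 1/24`; in particular `b_x ∈ (0,1)`. -/
theorem cdpsvrg_bx_feasibility
    (n : ℕ) (hn : 1 ≤ n) (pmin : ℝ) (hp : pmin ∈ Set.Ioc (0 : ℝ) (1 / (n : ℝ)))
    (μ μx Lxx Lyx L : ℝ)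
    (hμ : 0 < μ) (hμx : 0 < μx) (hLxx : 0 < Lxx) (hLyx : 0 < Lyx) (hL : 0 < L)
    (h1 : μ ≤ μx) (h2 : μx ≤ Lxx) (h3 : Lxx ≤ L) (h4 : Lyx ≤ L)
    (κf κx : ℝ) (hκf : κf = L / μ) (hκx : κx = Lxx / μx)
    (s bx : ℝ) (hs : s = μ * n * pmin / (24 * L ^ 2))
    (hbx : bx = s * μx - 4 * s ^ 2 * Lyx ^ 2 / (n * pmin)
        - 8 * s ^ 2 * (Lxx ^ 2 + Lyx ^ 2) / (n * pmin)) :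
    n * pmin / (144 * κf ^ 2) ≤ bx ∧
      bx < s * μx ∧
      s * μx ≤ n * pmin / (24 * κx ^ 2) ∧
      n * pmin / (24 * κx ^ 2) ≤ 1 / 24 ∧
      0 < bx ∧ bx < 1 :=
  cdpsvrg_bx_feasibility_general n pmin hp μ μx Lxx Lyx L hμ hLyx h1 h2 h3 h4 κf κx hκf hκx s bx hs
    hbx
end
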